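/- arXiv:2605.24982 — 7 statements merged into one kernel-verified Lean document; each statement's English description precedes it below -/
import Mathlib

section
/- Let A be a real symmetric positive definite n×n matrix, and for i = 1,…,N let Rᵢ be an nᵢ×n real matrix with Rᵢᵀ injective, and set Aᵢ := Rᵢ A Rᵢᵀ (which is then SPD). Suppose there is a coloring col : {1,…,N} → {1,…,N_c} such that col(k) = col(l) with k ≠ l implies R_l A R_kᵀ = 0. Then every eigenvalue of the matrix (∑_{i=1}^N Rᵢᵀ Aᵢ⁻¹ Rᵢ) A is real, nonnegative, and at most N_c. -/
open Matrix ComplexOrder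

private lemma asm_ofReal_hom_eq : Complex.ofReal = ⇑Complex.ofRealHom := rfl

private lemma asm_map_mul_ofReal {m : Type*} [Fintype m] (P Q : Matrix m m ℝ) :
    (P * Q).map Complex.ofReal = P.map Complex.ofReal * Q.map Complex.ofReal := by
  rw [asm_ofReal_hom_eq, Matrix.map_mul]

private lemma asm_map_CT {m k : Type*} (P : Matrix m k ℝ) :
    (Pᴴ).map Complex.ofReal = (P.map Complex.ofReal)ᴴ :=
  Matrix.conjTranspose_map _ (fun x => (Complex.conj_ofReal x).symm)

private lemma asm_psd_map {m : Type*} [Fintype m] {T : Matrix m m ℝ} (hT : T.PosSemidef) :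
    (T.map Complex.ofReal).PosSemidef := by
  classical
  open scoped MatrixOrder in obtain ⟨B, rfl⟩ := CStarAlgebra.nonneg_iff_eq_star_mul_self.mp hT.nonneg
  rw [star_eq_conjTranspose, asm_map_mul_ofReal, asm_map_CT]
  exact Matrix.posSemidef_conjTranspose_mul_self _

private lemma asm_pd_map {m : Type*} [Fintype m] [DecidableEq m] {T : Matrix m m ℝ}
    (hT : T.PosDef) : (T.map Complex.ofReal).PosDef := by
  have hdet : (T.map Complex.ofReal).det ≠ 0 := by
    have h : (T.map Complex.ofReal).det = Complex.ofReal T.det := by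
      rw [asm_ofReal_hom_eq, ← RingHom.mapMatrix_apply, ← RingHom.map_det]
    rw [h]
    simpa using hT.det_pos.ne'
  refine Matrix.PosDef.of_dotProduct_mulVec_pos (asm_psd_map hT.posSemidef).isHermitian fun x hx => ?_
  rcases lt_or_eq_of_le ((asm_psd_map hT.posSemidef).dotProduct_mulVec_nonneg x) with h | h
  · exact h
  · exfalso
    have h0 : (T.map Complex.ofReal) *ᵥ x = 0 :=
      ((asm_psd_map hT.posSemidef).dotProduct_mulVec_zero_iff x).mp h.symm
    have hinj : Function.Injective ((T.map Complex.ofReal) *ᵥ ·) := by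
      rw [Matrix.mulVec_injective_iff_isUnit, Matrix.isUnit_iff_isUnit_det]
      exact hdet.isUnit
    exact hx (hinj (by simpa using h0))

private lemma asm_posDef_conj {m k : Type*} [Fintype m] [Fintype k]
    {A : Matrix m m ℝ} (hA : A.PosDef) (B : Matrix m k ℝ)
    (hB : Function.Injective (fun x : k → ℝ => B *ᵥ x)) : (Bᵀ * A * B).PosDef := by
  rw [← Matrix.conjTranspose_eq_transpose_of_trivial]
  refine Matrix.PosDef.of_dotProduct_mulVec_pos (Matrix.isHermitian_conjTranspose_mul_mul B hA.isHermitian) fun x hx => ?_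
  have hx' : B *ᵥ x ≠ 0 := fun h => hx (hB (by simpa using h))
  simpa only [star_mulVec, dotProduct_mulVec, vecMul_vecMul] using hA.dotProduct_mulVec_pos hx'

private lemma asm_psd_sum {ι : Type*} {m : Type*} [Fintype m] (s : Finset ι)
    (f : ι → Matrix m m ℝ) (h : ∀ i ∈ s, (f i).PosSemidef) : (∑ i ∈ s, f i).PosSemidef :=
  Finset.sum_induction f _ (fun _ _ ha hb => ha.add hb) Matrix.PosSemidef.zero h

/-- **Additive Schwarz upper bound via coloring.**
If `A` is SPD, `Rᵢ` have injective transposes, `Aᵢ = Rᵢ A Rᵢᵀ`, and a coloring with `Nc`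
colors satisfies `col k = col l → R_l A R_kᵀ = 0` for `k ≠ l`, then every (complex)
eigenvalue of `(∑ᵢ Rᵢᵀ Aᵢ⁻¹ Rᵢ) A` is real, nonnegative, and at most `Nc`. -/
theorem asm_eigenvalue_coloring_bound {n N Nc : ℕ}
    (A : Matrix (Fin n) (Fin n) ℝ) (hA : A.PosDef)
    (ni : Fin N → ℕ) (R : (i : Fin N) → Matrix (Fin (ni i)) (Fin n) ℝ)
    (hR : ∀ i, Function.Injective (fun x : Fin (ni i) → ℝ => (R i)ᵀ *ᵥ x))
    (col : Fin N → Fin Nc)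
    (hcol : ∀ k l, k ≠ l → col k = col l → R l * A * (R k)ᵀ = 0)
    (μ : ℂ) (v : Fin n → ℂ) (hv : v ≠ 0)
    (heig : ((∑ i, (R i)ᵀ * (R i * A * (R i)ᵀ)⁻¹ * R i) * A).map Complex.ofReal *ᵥ v
      = μ • v) :
    μ.im = 0 ∧ 0 ≤ μ.re ∧ μ.re ≤ (Nc : ℝ) := by
  classical
  set M : Matrix (Fin n) (Fin n) ℝ := ∑ i, (R i)ᵀ * (R i * A * (R i)ᵀ)⁻¹ * R i with hM
  have hAt : Aᵀ = A := by
    have h := hA.isHermitian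
    rwa [← Matrix.conjTranspose_eq_transpose_of_trivial]
  -- each Aᵢ is positive definite
  have hAipd : ∀ i, (R i * A * (R i)ᵀ).PosDef := fun i => by
    have h := asm_posDef_conj hA ((R i)ᵀ) (hR i)
    simpa using h
  have hAinv : ∀ i, (R i * A * (R i)ᵀ)⁻¹ * (R i * A * (R i)ᵀ) = 1 := fun i =>
    Matrix.nonsing_inv_mul _ (hAipd i).det_pos.ne'.isUnit
  have hAiT : ∀ i, ((R i * A * (R i)ᵀ)⁻¹)ᵀ = (R i * A * (R i)ᵀ)⁻¹ := fun i => by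
    rw [Matrix.transpose_nonsing_inv]
    congr 1
    simp [Matrix.transpose_mul, hAt, Matrix.mul_assoc]
  -- the (A-orthogonal projection) matrices
  set P : Fin N → Matrix (Fin n) (Fin n) ℝ :=
    fun i => (R i)ᵀ * ((R i * A * (R i)ᵀ)⁻¹ * (R i * A)) with hP
  have hAiT' : ∀ i, (R i * (A * (R i)ᵀ))⁻¹ᵀ = (R i * (A * (R i)ᵀ))⁻¹ := fun i => by
    rw [← Matrix.mul_assoc]; exact hAiT i
  have hAP : ∀ i, (A * P i)ᵀ = A * P i := fun i => by
    simp [hP, Matrix.transpose_mul, Matrix.transpose_transpose, hAt, hAiT i, hAiT' i,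
      Matrix.mul_assoc]
  have hPidem : ∀ i, P i * P i = P i := fun i => by
    have cancel : ∀ Z : Matrix (Fin (ni i)) (Fin n) ℝ,
        (R i * A * (R i)ᵀ)⁻¹ * ((R i * A * (R i)ᵀ) * Z) = Z := fun Z => by
      rw [← Matrix.mul_assoc, hAinv i, Matrix.one_mul]
    have h1 : P i * P i = (R i)ᵀ * ((R i * A * (R i)ᵀ)⁻¹ * ((R i * A * (R i)ᵀ) *
        ((R i * A * (R i)ᵀ)⁻¹ * (R i * A)))) := by
      simp only [hP]; simp only [Matrix.mul_assoc]
    rw [h1, cancel]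
  have hPzero : ∀ i j, i ≠ j → col i = col j → P i * P j = 0 := fun i j hne hc => by
    have h0 : R i * A * (R j)ᵀ = 0 := hcol j i (Ne.symm hne) hc.symm
    have h1 : P i * P j = (R i)ᵀ * ((R i * A * (R i)ᵀ)⁻¹ * ((R i * A * (R j)ᵀ) *
        ((R j * A * (R j)ᵀ)⁻¹ * (R j * A)))) := by
      simp only [hP]; simp only [Matrix.mul_assoc]
    rw [h1, h0]
    simp
  -- the per-color sums
  set Q : Fin Nc → Matrix (Fin n) (Fin n) ℝ :=
    fun c => ∑ i ∈ Finset.univ.filter (fun i => col i = c), P i with hQ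
  have hQQ : ∀ c, Q c * Q c = Q c := fun c => by
    rw [hQ]
    simp only
    rw [Finset.sum_mul_sum]
    refine Finset.sum_congr rfl fun i hi => ?_
    refine (Finset.sum_eq_single_of_mem i hi fun j hj hne => ?_).trans (hPidem i)
    exact hPzero i j (Ne.symm hne)
      (((Finset.mem_filter.mp hi).2).trans ((Finset.mem_filter.mp hj).2).symm)
  have hAQsymm : ∀ c, (A * Q c)ᵀ = A * Q c := fun c => by
    rw [hQ]
    simp only [Finset.mul_sum, Matrix.transpose_sum]
    exact Finset.sum_congr rfl fun i _ => hAP i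
  have hQtA : ∀ c, (Q c)ᵀ * A = A * Q c := fun c => by
    calc (Q c)ᵀ * A = (Q c)ᵀ * Aᵀ := by rw [hAt]
    _ = (A * Q c)ᵀ := (Matrix.transpose_mul A (Q c)).symm
    _ = A * Q c := hAQsymm c
  have hQAQ : ∀ c, (Q c)ᵀ * A * Q c = A * Q c := fun c => by
    rw [hQtA c, Matrix.mul_assoc, hQQ c]
  have hAQpsd : ∀ c, (A * Q c).PosSemidef := fun c => by
    rw [← hQAQ c, ← Matrix.conjTranspose_eq_transpose_of_trivial]
    exact hA.posSemidef.conjTranspose_mul_mul_same _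
  have hAQle : ∀ c, (A - A * Q c).PosSemidef := fun c => by
    have key : (1 - Q c)ᵀ * A * (1 - Q c) = A - A * Q c := by
      rw [Matrix.transpose_sub, Matrix.transpose_one]
      simp only [Matrix.sub_mul, Matrix.mul_sub, Matrix.one_mul, Matrix.mul_one]
      rw [hQtA c, Matrix.mul_assoc, hQQ c]
      abel
    rw [← key, ← Matrix.conjTranspose_eq_transpose_of_trivial]
    exact hA.posSemidef.conjTranspose_mul_mul_same _
  -- fiberwise decomposition
  have hMA : M * A = ∑ c, Q c := by
    rw [hM, Finset.sum_mul, hQ]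
    rw [Finset.sum_fiberwise Finset.univ col P]
    exact Finset.sum_congr rfl fun i _ => by
      simp only [hP, Matrix.mul_assoc]
  -- the two real PSD facts
  have hS : (A * (M * A)).PosSemidef := by
    rw [hMA, Finset.mul_sum]
    exact asm_psd_sum _ _ fun c _ => hAQpsd c
  have hSle : ((Nc : ℝ) • A - A * (M * A)).PosSemidef := by
    have hcA : (Nc : ℝ) • A = ∑ _c : Fin Nc, A := by
      rw [Finset.sum_const, Finset.card_univ, Fintype.card_fin, Nat.cast_smul_eq_nsmul]
    rw [hMA, Finset.mul_sum, hcA, ← Finset.sum_sub_distrib]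
    exact asm_psd_sum _ _ fun c _ => hAQle c
  -- pass to ℂ
  have hA'pd := asm_pd_map hA
  have hS' := asm_psd_map hS
  have hSle' := asm_psd_map hSle
  set a : ℂ := star v ⬝ᵥ (A.map Complex.ofReal *ᵥ v) with ha_def
  set s : ℂ := star v ⬝ᵥ ((A * (M * A)).map Complex.ofReal *ᵥ v) with hs_def
  have heq : s = μ * a := by
    rw [hs_def, asm_map_mul_ofReal, ← Matrix.mulVec_mulVec, heig]
    simp [ha_def, Matrix.mulVec_smul, smul_eq_mul, Finset.mul_sum, dotProduct, mul_assoc,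
      mul_comm, mul_left_comm]
  have ha : (0 : ℂ) < a := hA'pd.dotProduct_mulVec_pos hv
  have hs : (0 : ℂ) ≤ s := hS'.dotProduct_mulVec_nonneg v
  have hle : s ≤ (Nc : ℂ) * a := by
    have h := hSle'.dotProduct_mulVec_nonneg v
    have hmap : (((Nc : ℝ) • A - A * (M * A)).map Complex.ofReal)
        = (Nc : ℂ) • (A.map Complex.ofReal) - (A * (M * A)).map Complex.ofReal := by
      ext i j
      simp [Matrix.map_apply, Matrix.sub_apply, Matrix.smul_apply, smul_eq_mul]
    rw [hmap] at h
    have h2 : (0 : ℂ) ≤ (Nc : ℂ) * a - s := by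
      rw [ha_def, hs_def]
      simpa [Matrix.sub_mulVec, Matrix.smul_mulVec, dotProduct_sub, dotProduct_smul,
        smul_eq_mul] using h
    exact sub_nonneg.mp h2
  -- extract real/imaginary information
  have hare : 0 < a.re := (Complex.lt_def.mp ha).1
  have haim : a.im = 0 := ((Complex.lt_def.mp ha).2).symm
  have hsre : 0 ≤ s.re := (Complex.le_def.mp hs).1
  have hsim : s.im = 0 := ((Complex.le_def.mp hs).2).symm
  have hsle : s.re ≤ (Nc : ℝ) * a.re := by
    have := (Complex.le_def.mp hle).1
    simpa [Complex.mul_re, haim] using this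
  have hre : s.re = μ.re * a.re := by
    have := congrArg Complex.re heq
    simpa [Complex.mul_re, haim] using this
  have him : μ.im = 0 := by
    have h := congrArg Complex.im heq
    simp [Complex.mul_im, haim, hsim] at h
    rcases h with h | h
    · exact h
    · exact absurd h hare.ne'
  refine ⟨him, ?_, ?_⟩
  · nlinarith [hre, hsre, hare]
  · nlinarith [hre, hsle, hare]
end

section
/- Let A be a real symmetric positive definite n×n matrix, v₁,…,v_N ∈ ℝⁿ, and col : {1,…,N} → {1,…,N_c} a coloring such that vᵢᵀ A v_j = 0 whenever i ≠ j and col(i) = col(j). Then (∑_{i=1}^N vᵢ)ᵀ A (∑_{i=1}^N vᵢ) ≤ N_c · ∑_{i=1}^N vᵢᵀ A vᵢ. -/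
open Matrix Finset


private lemma my_sum_dotProduct {ι n : Type*} [Fintype n] (s : Finset ι)
    (f : ι → n → ℝ) (y : n → ℝ) : (∑ i ∈ s, f i) ⬝ᵥ y = ∑ i ∈ s, f i ⬝ᵥ y := by
  classical
  induction s using Finset.induction_on with
  | empty => simp
  | insert _ _ h ih => simp [Finset.sum_insert h, add_dotProduct, ih]

private lemma my_dotProduct_sum {ι n : Type*} [Fintype n] (s : Finset ι)
    (f : ι → n → ℝ) (y : n → ℝ) : y ⬝ᵥ (∑ i ∈ s, f i) = ∑ i ∈ s, y ⬝ᵥ f i := by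
  classical
  induction s using Finset.induction_on with
  | empty => simp
  | insert _ _ h ih => simp [Finset.sum_insert h, dotProduct_add, ih]

private lemma my_mulVec_sum {ι m n : Type*} [Fintype n] (s : Finset ι)
    (A : Matrix m n ℝ) (f : ι → n → ℝ) : A *ᵥ (∑ i ∈ s, f i) = ∑ i ∈ s, A *ᵥ f i := by
  classical
  induction s using Finset.induction_on with
  | empty => simp
  | insert _ _ h ih => simp [Finset.sum_insert h, Matrix.mulVec_add, ih]

/-- **Energy-norm coloring estimate.**
If `A` is SPD and vectors `v₁,…,v_N` are pairwise `A`-orthogonal within each of `Nc`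
color classes, then `‖∑ vᵢ‖_A² ≤ Nc · ∑ ‖vᵢ‖_A²`. -/
theorem coloring_energy_estimate {n N Nc : ℕ}
    (A : Matrix (Fin n) (Fin n) ℝ) (hA : A.PosDef)
    (v : Fin N → Fin n → ℝ) (col : Fin N → Fin Nc)
    (hcol : ∀ i j, i ≠ j → col i = col j → (v i) ⬝ᵥ A *ᵥ (v j) = 0) :
    (∑ i, v i) ⬝ᵥ A *ᵥ (∑ i, v i) ≤ (Nc : ℝ) * ∑ i, (v i) ⬝ᵥ A *ᵥ (v i) := by
  classical
  set B : (Fin n → ℝ) → (Fin n → ℝ) → ℝ := fun x y => x ⬝ᵥ A *ᵥ y with hBdef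
  have hnonneg : ∀ x, 0 ≤ B x x := by
    intro x
    simpa [star_trivial] using hA.posSemidef.dotProduct_mulVec_nonneg x
  have hsym : ∀ x y, B x y = B y x := by
    intro x y
    have hAs : Aᵀ = A := hA.isHermitian.eq
    simp only [hBdef]
    rw [dotProduct_mulVec, ← mulVec_transpose, hAs, dotProduct_comm]
  have hsub : ∀ x y, B (x - y) (x - y) = B x x - 2 * B x y + B y y := by
    intro x y
    simp only [hBdef, mulVec_sub, dotProduct_sub, sub_dotProduct]
    have := hsym x y
    simp only [hBdef] at this
    ring_nf
    linarith [this]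
  have key : ∀ x y, 2 * B x y ≤ B x x + B y y := by
    intro x y
    have h1 := hnonneg (x - y)
    rw [hsub] at h1
    linarith
  -- group by colors
  set w : Fin Nc → Fin n → ℝ := fun c => ∑ i ∈ univ.filter (fun i => col i = c), v i with hwdef
  have hsum : ∑ i, v i = ∑ c, w c := by
    rw [hwdef]
    exact (Finset.sum_fiberwise univ col v).symm
  have hBsum : ∀ (x : Fin N → Fin n → ℝ) (y : Fin n → ℝ),
      B (∑ i, x i) y = ∑ i, B (x i) y := by
    intro x y
    simp only [hBdef]
    exact my_sum_dotProduct _ _ _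
  have hBsum' : ∀ (x : Fin Nc → Fin n → ℝ) (y : Fin n → ℝ),
      B y (∑ c, x c) = ∑ c, B y (x c) := by
    intro x y
    simp only [hBdef]
    rw [my_mulVec_sum]
    exact my_dotProduct_sum _ _ _
  -- expand B(w c, w c)
  have hdiag : ∀ c, B (w c) (w c) = ∑ i ∈ univ.filter (fun i => col i = c), B (v i) (v i) := by
    intro c
    have : B (w c) (w c)
        = ∑ i ∈ univ.filter (fun i => col i = c), ∑ j ∈ univ.filter (fun j => col j = c), B (v i) (v j) := by
      simp only [hwdef, hBdef]
      rw [my_sum_dotProduct]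
      refine Finset.sum_congr rfl fun i _ => ?_
      rw [my_mulVec_sum]
      exact my_dotProduct_sum _ _ _
    rw [this]
    refine Finset.sum_congr rfl fun i hi => ?_
    rw [Finset.sum_eq_single i]
    · intro j hj hne
      simp only [mem_filter, mem_univ, true_and] at hi hj
      exact hcol i j (Ne.symm hne) (hi.trans hj.symm)
    · intro h
      simp only [mem_filter, mem_univ, true_and] at hi
      exact absurd (Finset.mem_filter.mpr ⟨Finset.mem_univ i, hi⟩) h
  have hdiagsum : ∑ c, B (w c) (w c) = ∑ i, B (v i) (v i) := by
    rw [Finset.sum_congr rfl (fun c _ => hdiag c)]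
    exact Finset.sum_fiberwise univ col (fun i => B (v i) (v i))
  -- main estimate
  have hmain : B (∑ c, w c) (∑ c, w c) ≤ (Nc : ℝ) * ∑ c, B (w c) (w c) := by
    have hexp : B (∑ c, w c) (∑ c, w c) = ∑ c, ∑ d, B (w c) (w d) := by
      rw [show B (∑ c, w c) (∑ c, w c) = ∑ c, B (w c) (∑ d, w d) by
        simp only [hBdef]; exact my_sum_dotProduct _ _ _]
      exact Finset.sum_congr rfl fun c _ => hBsum' w (w c)
    rw [hexp]
    have hle : ∑ c, ∑ d, B (w c) (w d) ≤ ∑ c, ∑ d, (B (w c) (w c) + B (w d) (w d)) / 2 := by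
      refine Finset.sum_le_sum fun c _ => Finset.sum_le_sum fun d _ => ?_
      linarith [key (w c) (w d)]
    refine hle.trans (le_of_eq ?_)
    have : ∀ c : Fin Nc, ∑ d, (B (w c) (w c) + B (w d) (w d)) / 2
        = ((Nc : ℝ) * B (w c) (w c) + ∑ d, B (w d) (w d)) / 2 := by
      intro c
      rw [← Finset.sum_div, Finset.sum_add_distrib, Finset.sum_const, Finset.card_univ,
        Fintype.card_fin, nsmul_eq_mul]
    rw [Finset.sum_congr rfl fun c _ => this c, ← Finset.sum_div, Finset.sum_add_distrib,
      ← Finset.mul_sum, Finset.sum_const, Finset.card_univ, Fintype.card_fin, nsmul_eq_mul]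
    ring
  calc (∑ i, v i) ⬝ᵥ A *ᵥ (∑ i, v i) = B (∑ c, w c) (∑ c, w c) := by rw [← hsum]
    _ ≤ (Nc : ℝ) * ∑ c, B (w c) (w c) := hmain
    _ = (Nc : ℝ) * ∑ i, (v i) ⬝ᵥ A *ᵥ (v i) := by rw [hdiagsum]
end

section
/- (Fictitious space lemma, finite-dimensional form.) Let A be a real symmetric positive definite n×n matrix, B a real symmetric positive definite m×m matrix, and R an n×m real matrix satisfying: (i) R is surjective; (ii) there exists c_R > 0 with (Ru_P)ᵀ A (Ru_P) ≤ c_R · (u_Pᵀ B u_P) for all u_P ∈ ℝᵐ; (iii) there exists c_T > 0 such that for every u ∈ ℝⁿ there is u_P ∈ ℝᵐ with R u_P = u and c_T · (u_Pᵀ B u_P) ≤ uᵀ A u. Then M⁻¹ := R B⁻¹ Rᵀ is symmetric positive definite and every eigenvalue of M⁻¹ A lies in the interval [c_T, c_R]. -/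
open Matrix

lemma fsl_dot_map {k l : ℕ} (S : Matrix (Fin k) (Fin l) ℝ) (a : Fin k → ℝ) (b : Fin l → ℝ) :
    (fun i => ((a i : ℂ))) ⬝ᵥ (S.map Complex.ofReal) *ᵥ (fun i => ((b i : ℂ)))
      = ((a ⬝ᵥ S *ᵥ b : ℝ) : ℂ) := by
  simp [dotProduct, Matrix.mulVec, Matrix.map_apply, Finset.mul_sum]

lemma fsl_symm_dot {k : ℕ} {S : Matrix (Fin k) (Fin k) ℝ} (hS : S.IsHermitian)
    (x y : Fin k → ℝ) : x ⬝ᵥ S *ᵥ y = y ⬝ᵥ S *ᵥ x := by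
  have hST : Sᵀ = S := by have := hS; rwa [Matrix.IsHermitian, Matrix.conjTranspose_eq_transpose_of_trivial] at this
  rw [Matrix.dotProduct_mulVec, ← Matrix.mulVec_transpose, hST, dotProduct_comm]

lemma fsl_cs {k : ℕ} {S : Matrix (Fin k) (Fin k) ℝ} (hS : S.PosSemidef)
    (x y : Fin k → ℝ) : (x ⬝ᵥ S *ᵥ y)^2 ≤ (x ⬝ᵥ S *ᵥ x) * (y ⬝ᵥ S *ᵥ y) := by
  have h : ∀ t : ℝ, 0 ≤ (y ⬝ᵥ S *ᵥ y) * (t*t) + (2 * (x ⬝ᵥ S *ᵥ y)) * t + (x ⬝ᵥ S *ᵥ x) := by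
    intro t
    have := hS.dotProduct_mulVec_nonneg (x + t • y)
    simp only [star_trivial] at this
    have e : (x + t • y) ⬝ᵥ S *ᵥ (x + t • y)
        = (y ⬝ᵥ S *ᵥ y) * (t*t) + (2 * (x ⬝ᵥ S *ᵥ y)) * t + (x ⬝ᵥ S *ᵥ x) := by
      rw [Matrix.mulVec_add, Matrix.mulVec_smul, add_dotProduct,
        smul_dotProduct, dotProduct_add, dotProduct_add,
        dotProduct_smul, dotProduct_smul, fsl_symm_dot hS.1 y x]
      ring_nf
    linarith [e ▸ this]
  have := discrim_le_zero h
  simp only [discrim] at this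
  nlinarith [this]

lemma fsl_quad_map {k : ℕ} (S : Matrix (Fin k) (Fin k) ℝ) (hS : S.IsHermitian) (z : Fin k → ℂ) :
    star z ⬝ᵥ (S.map Complex.ofReal) *ᵥ z
      = (((fun i => (z i).re) ⬝ᵥ S *ᵥ (fun i => (z i).re)
          + (fun i => (z i).im) ⬝ᵥ S *ᵥ (fun i => (z i).im) : ℝ) : ℂ) := by
  set a : Fin k → ℝ := fun i => (z i).re
  set b : Fin k → ℝ := fun i => (z i).im
  have hz : z = (fun i => ((a i : ℂ))) + Complex.I • (fun i => ((b i : ℂ))) := by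
    funext i
    simp [a, b, Complex.ext_iff]
  have hsz : star z = (fun i => ((a i : ℂ))) - Complex.I • (fun i => ((b i : ℂ))) := by
    funext i
    simp [hz, Complex.ext_iff]
  rw [hsz]
  nth_rewrite 1 [hz]
  rw [Matrix.mulVec_add, Matrix.mulVec_smul, sub_dotProduct,
    dotProduct_add, dotProduct_add, smul_dotProduct,
    dotProduct_smul, dotProduct_smul,
    fsl_dot_map, fsl_dot_map, fsl_dot_map, smul_dotProduct, fsl_dot_map,
    fsl_symm_dot hS b a]
  simp only [smul_eq_mul]
  push_cast
  ring_nf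
  rw [Complex.I_sq]
  ring

/-- **Fictitious space lemma (finite-dimensional form).**
If `A`, `B` are SPD, `R` is surjective, continuous with constant `c_R`, and admits a
stable decomposition with constant `c_T`, then `M⁻¹ = R B⁻¹ Rᵀ` is SPD and every
eigenvalue of `M⁻¹ A` lies in `[c_T, c_R]`. -/
theorem fictitious_space_lemma {n m : ℕ}
    (A : Matrix (Fin n) (Fin n) ℝ) (hA : A.PosDef)
    (B : Matrix (Fin m) (Fin m) ℝ) (hB : B.PosDef)
    (R : Matrix (Fin n) (Fin m) ℝ)
    (hsurj : Function.Surjective (fun uP : Fin m → ℝ => R *ᵥ uP))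
    (cR cT : ℝ) (hcR : 0 < cR) (hcT : 0 < cT)
    (hcont : ∀ uP : Fin m → ℝ, (R *ᵥ uP) ⬝ᵥ A *ᵥ (R *ᵥ uP) ≤ cR * (uP ⬝ᵥ B *ᵥ uP))
    (hstab : ∀ u : Fin n → ℝ, ∃ uP : Fin m → ℝ,
      R *ᵥ uP = u ∧ cT * (uP ⬝ᵥ B *ᵥ uP) ≤ u ⬝ᵥ A *ᵥ u) :
    (R * B⁻¹ * Rᵀ).PosDef ∧
    ∀ (μ : ℂ) (v : Fin n → ℂ), v ≠ 0 →
      ((R * B⁻¹ * Rᵀ) * A).map Complex.ofReal *ᵥ v = μ • v →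
      μ.im = 0 ∧ cT ≤ μ.re ∧ μ.re ≤ cR := by
  set Minv := R * B⁻¹ * Rᵀ with hMinv
  have hAinv : A⁻¹.PosDef := hA.inv
  have hBinv : B⁻¹.PosDef := hB.inv
  have hAdet : IsUnit A.det := hA.det_pos.ne'.isUnit
  have hBdet : IsUnit B.det := hB.det_pos.ne'.isUnit
  -- quadratic form of Minv
  have hquad : ∀ x : Fin n → ℝ,
      x ⬝ᵥ Minv *ᵥ x = (Rᵀ *ᵥ x) ⬝ᵥ B⁻¹ *ᵥ (Rᵀ *ᵥ x) := by
    intro x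
    rw [hMinv, ← Matrix.mulVec_mulVec, ← Matrix.mulVec_mulVec,
      Matrix.dotProduct_mulVec x R, ← Matrix.mulVec_transpose]
  -- Minv is symmetric
  have hherm : Minv.IsHermitian := by
    have hBi : B⁻¹ᴴ = B⁻¹ := hBinv.1
    rw [Matrix.IsHermitian, hMinv, Matrix.conjTranspose_mul, Matrix.conjTranspose_mul, hBi]
    have hR : Rᴴ = Rᵀ := by ext i j; simp [Matrix.conjTranspose_apply]
    have hRT : Rᵀᴴ = R := by ext i j; simp [Matrix.conjTranspose_apply]
    rw [hR, hRT, Matrix.mul_assoc]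
  -- upper bound
  have hup : ∀ x : Fin n → ℝ, x ⬝ᵥ Minv *ᵥ x ≤ cR * (x ⬝ᵥ A⁻¹ *ᵥ x) := by
    intro x
    set uP := B⁻¹ *ᵥ (Rᵀ *ᵥ x) with huP
    have hq : x ⬝ᵥ Minv *ᵥ x = x ⬝ᵥ (R *ᵥ uP) := by
      rw [hMinv, ← Matrix.mulVec_mulVec, ← Matrix.mulVec_mulVec]
    have hBuP : B *ᵥ uP = Rᵀ *ᵥ x := by
      rw [huP, Matrix.mulVec_mulVec, Matrix.mul_nonsing_inv _ hBdet, Matrix.one_mulVec]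
    have huPB : uP ⬝ᵥ B *ᵥ uP = x ⬝ᵥ Minv *ᵥ x := by
      rw [hBuP, hquad, huP]
      exact dotProduct_comm _ _
    have hq0 : 0 ≤ x ⬝ᵥ Minv *ᵥ x := by
      rw [← huPB]
      simpa using hB.posSemidef.dotProduct_mulVec_nonneg uP
    have hp0 : 0 ≤ x ⬝ᵥ A⁻¹ *ᵥ x := by simpa using hAinv.posSemidef.dotProduct_mulVec_nonneg x
    -- Cauchy-Schwarz with S = A⁻¹, vectors x and A *ᵥ (R *ᵥ uP)
    have hAy : A⁻¹ *ᵥ (A *ᵥ (R *ᵥ uP)) = R *ᵥ uP := by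
      rw [Matrix.mulVec_mulVec, Matrix.nonsing_inv_mul _ hAdet, Matrix.one_mulVec]
    have hcs := fsl_cs hAinv.posSemidef x (A *ᵥ (R *ᵥ uP))
    rw [hAy] at hcs
    have h2 : (A *ᵥ (R *ᵥ uP)) ⬝ᵥ (R *ᵥ uP) = (R *ᵥ uP) ⬝ᵥ A *ᵥ (R *ᵥ uP) :=
      dotProduct_comm _ _
    rw [h2] at hcs
    have hcR' : (R *ᵥ uP) ⬝ᵥ A *ᵥ (R *ᵥ uP) ≤ cR * (uP ⬝ᵥ B *ᵥ uP) := hcont uP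
    rw [huPB] at hcR'
    rw [← hq] at hcs
    set q := x ⬝ᵥ Minv *ᵥ x
    set p := x ⬝ᵥ A⁻¹ *ᵥ x
    -- hcs : q^2 ≤ p * ((R *ᵥ uP) ⬝ᵥ A *ᵥ (R *ᵥ uP)), hcR' : ... ≤ cR * q
    rcases eq_or_lt_of_le hq0 with h0 | h0
    · nlinarith
    · nlinarith [mul_le_mul_of_nonneg_left hcR' hp0]
  -- lower bound
  have hlo : ∀ x : Fin n → ℝ, cT * (x ⬝ᵥ A⁻¹ *ᵥ x) ≤ x ⬝ᵥ Minv *ᵥ x := by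
    intro x
    obtain ⟨uP, hRuP, hs⟩ := hstab (A⁻¹ *ᵥ x)
    have hp : x ⬝ᵥ (R *ᵥ uP) = x ⬝ᵥ A⁻¹ *ᵥ x := by rw [hRuP]
    have hu : (A⁻¹ *ᵥ x) ⬝ᵥ A *ᵥ (A⁻¹ *ᵥ x) = x ⬝ᵥ A⁻¹ *ᵥ x := by
      rw [Matrix.mulVec_mulVec, Matrix.mul_nonsing_inv _ hAdet, Matrix.one_mulVec]
      exact dotProduct_comm _ _
    rw [hu] at hs
    have hBuP : B⁻¹ *ᵥ (B *ᵥ uP) = uP := by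
      rw [Matrix.mulVec_mulVec, Matrix.nonsing_inv_mul _ hBdet, Matrix.one_mulVec]
    have hcs := fsl_cs hBinv.posSemidef (Rᵀ *ᵥ x) (B *ᵥ uP)
    rw [hBuP, ← hquad] at hcs
    have h1 : (Rᵀ *ᵥ x) ⬝ᵥ uP = x ⬝ᵥ A⁻¹ *ᵥ x := by
      rw [Matrix.mulVec_transpose, ← Matrix.dotProduct_mulVec, hp]
    have h2 : (B *ᵥ uP) ⬝ᵥ uP = uP ⬝ᵥ B *ᵥ uP := dotProduct_comm _ _
    rw [h1, h2] at hcs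
    have hq0 : 0 ≤ x ⬝ᵥ Minv *ᵥ x := by
      rw [hquad]
      simpa using hBinv.posSemidef.dotProduct_mulVec_nonneg (Rᵀ *ᵥ x)
    have hs0 : 0 ≤ uP ⬝ᵥ B *ᵥ uP := by simpa using hB.posSemidef.dotProduct_mulVec_nonneg uP
    have hp0 : 0 ≤ x ⬝ᵥ A⁻¹ *ᵥ x := by simpa using hAinv.posSemidef.dotProduct_mulVec_nonneg x
    set q := x ⬝ᵥ Minv *ᵥ x
    set p := x ⬝ᵥ A⁻¹ *ᵥ x
    rcases eq_or_lt_of_le hp0 with h0 | h0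
    · rw [← h0]; simpa using hq0
    · nlinarith [mul_le_mul_of_nonneg_left hs (le_of_lt h0)]
  -- Minv is PosDef
  have hMpd : Minv.PosDef := by
    refine Matrix.PosDef.of_dotProduct_mulVec_pos hherm (fun x hx => ?_)
    have := hAinv.dotProduct_mulVec_pos hx
    simp only [star_trivial] at this ⊢
    calc (0:ℝ) < cT * (x ⬝ᵥ A⁻¹ *ᵥ x) := mul_pos hcT this
    _ ≤ x ⬝ᵥ Minv *ᵥ x := hlo x
  refine ⟨hMpd, ?_⟩
  intro μ v hv heig
  have hmap : (Minv * A).map Complex.ofReal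
      = Minv.map Complex.ofReal * A.map Complex.ofReal := by
    ext i j
    simp [Matrix.mul_apply, Matrix.map_apply]
  set a : Fin n → ℝ := fun i => (v i).re with ha
  set b : Fin n → ℝ := fun i => (v i).im with hb
  set w : Fin n → ℂ := (A.map Complex.ofReal) *ᵥ v with hw
  have heig' : Minv.map Complex.ofReal *ᵥ w = μ • v := by
    rw [hw, Matrix.mulVec_mulVec, ← hmap]
    exact heig
  have hwre : (fun i => (w i).re) = A *ᵥ a := by
    funext i
    simp [hw, Matrix.mulVec, dotProduct, Matrix.map_apply,
      Complex.re_sum, Complex.re_ofReal_mul, ha]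
  have hwim : (fun i => (w i).im) = A *ᵥ b := by
    funext i
    simp [hw, Matrix.mulVec, dotProduct, Matrix.map_apply,
      Complex.im_sum, Complex.im_ofReal_mul, hb]
  have hQ : star w ⬝ᵥ (Minv.map Complex.ofReal) *ᵥ w
      = (((A *ᵥ a) ⬝ᵥ Minv *ᵥ (A *ᵥ a) + (A *ᵥ b) ⬝ᵥ Minv *ᵥ (A *ᵥ b) : ℝ) : ℂ) := by
    rw [fsl_quad_map Minv hherm w, hwre, hwim]
  have hP : star v ⬝ᵥ (A.map Complex.ofReal) *ᵥ v
      = ((a ⬝ᵥ A *ᵥ a + b ⬝ᵥ A *ᵥ b : ℝ) : ℂ) := fsl_quad_map A hA.1 v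
  have hAherm : (A.map Complex.ofReal)ᴴ = A.map Complex.ofReal := by
    ext i j
    have hAji : A j i = A i j := by
      have := congrFun (congrFun hA.1 i) j
      simpa [Matrix.conjTranspose_apply] using this
    simp [Matrix.conjTranspose_apply, Matrix.map_apply, hAji]
  have hwv : star w ⬝ᵥ v = star v ⬝ᵥ (A.map Complex.ofReal) *ᵥ v := by
    rw [hw, Matrix.star_mulVec, ← Matrix.dotProduct_mulVec, hAherm]
  set Pr : ℝ := a ⬝ᵥ A *ᵥ a + b ⬝ᵥ A *ᵥ b with hPr
  set Qr : ℝ := (A *ᵥ a) ⬝ᵥ Minv *ᵥ (A *ᵥ a) + (A *ᵥ b) ⬝ᵥ Minv *ᵥ (A *ᵥ b) with hQr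
  have hkey : ((Qr : ℝ) : ℂ) = μ * ((Pr : ℝ) : ℂ) := by
    rw [← hQ, heig', dotProduct_smul, hwv, hP, smul_eq_mul]
  have hab : a ≠ 0 ∨ b ≠ 0 := by
    by_contra h
    push_neg at h
    apply hv
    funext i
    have h1 := congrFun h.1 i
    have h2 := congrFun h.2 i
    exact Complex.ext (by simpa [ha] using h1) (by simpa [hb] using h2)
  have hPpos : 0 < Pr := by
    have ha0 : 0 ≤ a ⬝ᵥ A *ᵥ a := by simpa using hA.posSemidef.dotProduct_mulVec_nonneg a
    have hb0 : 0 ≤ b ⬝ᵥ A *ᵥ b := by simpa using hA.posSemidef.dotProduct_mulVec_nonneg b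
    rcases hab with h | h
    · have := hA.dotProduct_mulVec_pos h
      simp only [star_trivial] at this
      rw [hPr]; linarith
    · have := hA.dotProduct_mulVec_pos h
      simp only [star_trivial] at this
      rw [hPr]; linarith
  have hAinvA : ∀ y : Fin n → ℝ, (A *ᵥ y) ⬝ᵥ A⁻¹ *ᵥ (A *ᵥ y) = y ⬝ᵥ A *ᵥ y := by
    intro y
    rw [Matrix.mulVec_mulVec, Matrix.nonsing_inv_mul _ hAdet, Matrix.one_mulVec]
    exact dotProduct_comm _ _
  have hQlo : cT * Pr ≤ Qr := by
    have h1 := hlo (A *ᵥ a)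
    have h2 := hlo (A *ᵥ b)
    rw [hAinvA] at h1 h2
    rw [hPr, hQr]
    linarith
  have hQhi : Qr ≤ cR * Pr := by
    have h1 := hup (A *ᵥ a)
    have h2 := hup (A *ᵥ b)
    rw [hAinvA] at h1 h2
    rw [hPr, hQr]
    linarith
  have hPne : ((Pr : ℝ) : ℂ) ≠ 0 := by exact_mod_cast hPpos.ne'
  have hμ : μ = ((Qr / Pr : ℝ) : ℂ) := by
    push_cast
    rw [eq_div_iff hPne]
    exact hkey.symm
  refine ⟨by rw [hμ]; simp, ?_, ?_⟩
  · rw [hμ, Complex.ofReal_re, le_div_iff₀ hPpos]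
    linarith
  · rw [hμ, Complex.ofReal_re, div_le_iff₀ hPpos]
    linarith
end

section
/- Let A be a real symmetric positive definite n×n matrix, B a real symmetric positive definite m×m matrix, and R an n×m real surjective matrix such that (Ru_P)ᵀ A (Ru_P) ≤ c_R · (u_Pᵀ B u_P) for some c_R > 0 and all u_P ∈ ℝᵐ. Then every eigenvalue of (R B⁻¹ Rᵀ) A is at most c_R. -/
open Matrix
open scoped ComplexOrder

private lemma mapC_mul {k l p : ℕ} (X : Matrix (Fin k) (Fin l) ℝ) (Y : Matrix (Fin l) (Fin p) ℝ) :
    (X * Y).map Complex.ofReal = X.map Complex.ofReal * Y.map Complex.ofReal := by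
  have : (Complex.ofReal : ℝ → ℂ) = ⇑Complex.ofRealHom := rfl
  rw [this, Matrix.map_mul]

open scoped MatrixOrder in
private lemma exists_eq_conjTranspose_mul_self' {k : ℕ} {S : Matrix (Fin k) (Fin k) ℝ}
    (hS : S.PosSemidef) : ∃ C : Matrix (Fin k) (Fin k) ℝ, S = Cᴴ * C := by
  classical
  obtain ⟨B, hB⟩ := CStarAlgebra.nonneg_iff_eq_star_mul_self.mp hS.nonneg
  exact ⟨B, hB⟩

private lemma mapC_posSemidef {k : ℕ} {S : Matrix (Fin k) (Fin k) ℝ} (hS : S.PosSemidef) :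
    (S.map Complex.ofReal).PosSemidef := by
  obtain ⟨C, hC⟩ := exists_eq_conjTranspose_mul_self' hS
  have hCT : (Cᴴ).map Complex.ofReal = (C.map Complex.ofReal)ᴴ := by
    ext i j
    simp [conjTranspose_apply, Complex.conj_ofReal]
  have h : S.map Complex.ofReal = (C.map Complex.ofReal)ᴴ * (C.map Complex.ofReal) := by
    rw [hC, mapC_mul, hCT]
  rw [h]
  exact posSemidef_conjTranspose_mul_self _

private lemma quad_conj {k : ℕ} (X : Matrix (Fin k) (Fin k) ℂ) (v : Fin k → ℂ) :
    star v ⬝ᵥ ((Xᴴ * X) *ᵥ v) = star (X *ᵥ v) ⬝ᵥ (X *ᵥ v) := by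
  rw [star_mulVec, ← mulVec_mulVec, dotProduct_mulVec]

private lemma quad_sandwich {k : ℕ} (M A : Matrix (Fin k) (Fin k) ℝ) (hM : Mᵀ = M)
    (x : Fin k → ℝ) :
    x ⬝ᵥ ((M * A * M) *ᵥ x) = (M *ᵥ x) ⬝ᵥ (A *ᵥ (M *ᵥ x)) := by
  rw [← mulVec_mulVec, ← mulVec_mulVec, dotProduct_mulVec x M, ← mulVec_transpose, hM]

/-- **Continuity implies the upper spectral bound (fictitious space lemma, upper part).**
If `A`, `B` are SPD, `R` is surjective, and `(Ru_P)ᵀ A (Ru_P) ≤ c_R · u_Pᵀ B u_P` for all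
`u_P`, then every eigenvalue of `(R B⁻¹ Rᵀ) A` is (real and) at most `c_R`. -/
theorem fictitious_space_upper_bound {n m : ℕ}
    (A : Matrix (Fin n) (Fin n) ℝ) (hA : A.PosDef)
    (B : Matrix (Fin m) (Fin m) ℝ) (hB : B.PosDef)
    (R : Matrix (Fin n) (Fin m) ℝ)
    (hsurj : Function.Surjective (fun uP : Fin m → ℝ => R *ᵥ uP))
    (cR : ℝ) (hcR : 0 < cR)
    (hcont : ∀ uP : Fin m → ℝ, (R *ᵥ uP) ⬝ᵥ A *ᵥ (R *ᵥ uP) ≤ cR * (uP ⬝ᵥ B *ᵥ uP)) :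
    ∀ (μ : ℂ) (v : Fin n → ℂ), v ≠ 0 →
      ((R * B⁻¹ * Rᵀ) * A).map Complex.ofReal *ᵥ v = μ • v →
      μ.im = 0 ∧ μ.re ≤ cR := by
  classical
  intro μ v hv heq
  obtain ⟨M, hM⟩ : ∃ M', M' = R * B⁻¹ * Rᵀ := ⟨_, rfl⟩
  rw [← hM] at heq
  have hBinvT : B⁻¹ᵀ = B⁻¹ := by
    rw [← conjTranspose_eq_transpose_of_trivial]; exact hB.inv.isHermitian
  have hAsym : Aᵀ = A := by
    rw [← conjTranspose_eq_transpose_of_trivial]; exact hA.isHermitian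
  have hMsym : Mᵀ = M := by
    rw [hM, transpose_mul, transpose_mul, transpose_transpose, hBinvT, Matrix.mul_assoc]
  have hMherm : M.IsHermitian := by
    rw [Matrix.IsHermitian, conjTranspose_eq_transpose_of_trivial, hMsym]
  have hMps : M.PosSemidef := by
    rw [hM]
    have hRT : Rᵀ = Rᴴ := by rw [← conjTranspose_eq_transpose_of_trivial]
    rw [hRT]
    exact hB.inv.posSemidef.mul_mul_conjTranspose_same R
  have hBunit : IsUnit B.det := hB.det_pos.ne'.isUnit
  -- the key real inequality
  have hkey : ∀ x : Fin n → ℝ,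
      x ⬝ᵥ ((M * A * M) *ᵥ x) ≤ cR * (x ⬝ᵥ M *ᵥ x) := by
    intro x
    have h := hcont (B⁻¹ *ᵥ (Rᵀ *ᵥ x))
    have h1 : R *ᵥ (B⁻¹ *ᵥ (Rᵀ *ᵥ x)) = M *ᵥ x := by
      rw [mulVec_mulVec, mulVec_mulVec, hM]
    have h2 : B *ᵥ (B⁻¹ *ᵥ (Rᵀ *ᵥ x)) = Rᵀ *ᵥ x := by
      rw [mulVec_mulVec, Matrix.mul_nonsing_inv B hBunit, one_mulVec]
    rw [h1, h2] at h
    have h3 : (B⁻¹ *ᵥ (Rᵀ *ᵥ x)) ⬝ᵥ (Rᵀ *ᵥ x) = x ⬝ᵥ M *ᵥ x := by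
      rw [dotProduct_comm, hM, ← mulVec_mulVec, ← mulVec_mulVec,
        dotProduct_mulVec x R, ← mulVec_transpose, dotProduct_mulVec]
    rw [h3] at h
    rw [quad_sandwich M A hMsym x]
    exact h
  -- S := cR • M - M*A*M is PSD
  have hMAMherm : (M * A * M).IsHermitian := by
    have h := isHermitian_conjTranspose_mul_mul (A := A) M hA.isHermitian
    rwa [show Mᴴ = M from hMherm] at h
  have hSps : (cR • M - M * A * M).PosSemidef := by
    rw [posSemidef_iff_dotProduct_mulVec]
    constructor
    · refine IsHermitian.sub ?_ hMAMherm
      rw [Matrix.IsHermitian, conjTranspose_eq_transpose_of_trivial, transpose_smul, hMsym]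
    · intro x
      simp only [star_trivial, sub_mulVec, dotProduct_sub, smul_mulVec,
        dotProduct_smul, smul_eq_mul, sub_nonneg]
      exact hkey x
  -- move to ℂ
  obtain ⟨Aℂ, hAC⟩ : ∃ X, X = A.map Complex.ofReal := ⟨_, rfl⟩
  obtain ⟨Mℂ, hMC⟩ : ∃ X, X = M.map Complex.ofReal := ⟨_, rfl⟩
  have heq' : Mℂ *ᵥ (Aℂ *ᵥ v) = μ • v := by
    rw [hMC, hAC, mulVec_mulVec, ← mapC_mul]; exact heq
  obtain ⟨w, hw⟩ : ∃ w', w' = Aℂ *ᵥ v := ⟨_, rfl⟩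
  obtain ⟨t, ht⟩ : ∃ t', t' = star v ⬝ᵥ w := ⟨_, rfl⟩
  have heqw : Mℂ *ᵥ w = μ • v := by rw [hw]; exact heq'
  have hAherm : Aℂ.IsHermitian := by
    rw [hAC]
    ext i j
    simp only [conjTranspose_apply, map_apply, Complex.star_def, Complex.conj_ofReal]
    norm_cast
    exact (star_trivial _).symm.trans (hA.isHermitian.apply i j)
  have htnn : (0 : ℂ) ≤ t := by
    rw [ht, hw]
    have hps := mapC_posSemidef hA.posSemidef
    rw [← hAC] at hps
    exact hps.dotProduct_mulVec_nonneg v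
  rw [Complex.nonneg_iff] at htnn
  -- t ≠ 0 since A is PosDef and v ≠ 0
  have htne : t ≠ 0 := by
    intro ht0
    obtain ⟨C, hC⟩ := exists_eq_conjTranspose_mul_self' hA.posSemidef
    obtain ⟨Cℂ, hCC⟩ : ∃ X, X = C.map Complex.ofReal := ⟨_, rfl⟩
    have hCT : (Cᴴ).map Complex.ofReal = Cℂᴴ := by
      rw [hCC]; ext i j; simp [conjTranspose_apply, Complex.conj_ofReal]
    have hACeq : Aℂ = Cℂᴴ * Cℂ := by rw [hAC, hC, mapC_mul, hCT, hCC]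
    have hz : star (Cℂ *ᵥ v) ⬝ᵥ (Cℂ *ᵥ v) = 0 := by
      rw [← quad_conj, ← hACeq, ← hw, ← ht, ht0]
    have hCv : Cℂ *ᵥ v = 0 := dotProduct_star_self_eq_zero.mp hz
    have hAv : Aℂ *ᵥ v = 0 := by
      rw [hACeq, ← mulVec_mulVec, hCv, mulVec_zero]
    have hdet : IsUnit Aℂ.det := by
      have hdd : (Complex.ofRealHom A.det : ℂ) = Aℂ.det := by
        rw [RingHom.map_det]; rw [hAC]; rfl
      rw [← hdd]
      simp only [Complex.ofRealHom_eq_coe]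
      exact isUnit_iff_ne_zero.mpr (by exact_mod_cast hA.det_pos.ne')
    have hinj := Matrix.mulVec_injective_iff_isUnit.mpr
      ((Matrix.isUnit_iff_isUnit_det Aℂ).mpr hdet)
    exact hv (hinj (by rw [hAv, mulVec_zero]))
  have htpos : 0 < t.re := lt_of_le_of_ne htnn.1 (by
    intro h
    exact htne (Complex.ext h.symm htnn.2.symm))
  -- star w ⬝ᵥ v = t
  have hwv : star w ⬝ᵥ v = t := by
    rw [hw, star_mulVec, hAherm, ← dotProduct_mulVec, ← hw, ht, hw]
  -- quadratic identities
  have hqM : star w ⬝ᵥ (Mℂ *ᵥ w) = μ * t := by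
    rw [heqw, dotProduct_smul, smul_eq_mul, hwv]
  have hqMAM : star w ⬝ᵥ (((M * A * M).map Complex.ofReal) *ᵥ w) = μ ^ 2 * t := by
    have hsplit : (M * A * M).map Complex.ofReal = Mℂ * Aℂ * Mℂ := by
      rw [mapC_mul, mapC_mul, ← hMC, ← hAC]
    have hvec : (Mℂ * Aℂ * Mℂ) *ᵥ w = μ • (μ • v) := by
      rw [← mulVec_mulVec, ← mulVec_mulVec, heqw, mulVec_smul, mulVec_smul, ← hw, heqw]
    rw [hsplit, hvec, dotProduct_smul, dotProduct_smul, smul_eq_mul, smul_eq_mul, hwv]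
    ring
  -- positivity over ℂ
  have h1 : (0 : ℂ) ≤ μ * t := by
    rw [← hqM, hMC]
    exact (mapC_posSemidef hMps).dotProduct_mulVec_nonneg w
  have h2 : (0 : ℂ) ≤ cR * (μ * t) - μ ^ 2 * t := by
    have hpos := (mapC_posSemidef hSps).dotProduct_mulVec_nonneg w
    have hsmap : (cR • M - M * A * M).map Complex.ofReal
        = (cR : ℂ) • Mℂ - (M * A * M).map Complex.ofReal := by
      rw [hMC]; ext i j; simp [Matrix.sub_apply, Matrix.smul_apply, map_apply]
    rw [hsmap, sub_mulVec, dotProduct_sub, smul_mulVec, dotProduct_smul, hqM, hqMAM,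
      smul_eq_mul] at hpos
    exact hpos
  rw [Complex.nonneg_iff] at h1 h2
  obtain ⟨h1re, h1im⟩ := h1
  obtain ⟨h2re, h2im⟩ := h2
  have htim : t.im = 0 := htnn.2.symm
  have hmuim : μ.im = 0 := by
    have e : (μ * t).im = μ.im * t.re := by
      rw [Complex.mul_im, htim]; ring
    rw [e] at h1im
    exact (mul_eq_zero.mp h1im.symm).resolve_right htpos.ne'
  refine ⟨hmuim, ?_⟩
  have h1re' : 0 ≤ μ.re * t.re := by
    have e : (μ * t).re = μ.re * t.re := by rw [Complex.mul_re, htim, hmuim]; ring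
    rwa [e] at h1re
  have h2re' : 0 ≤ (cR * μ.re - μ.re ^ 2) * t.re := by
    have e1 : (μ ^ 2).re = μ.re ^ 2 := by
      rw [sq, Complex.mul_re, hmuim]; ring
    have e2 : (μ ^ 2).im = 0 := by
      rw [sq, Complex.mul_im, hmuim]; ring
    have e : ((cR : ℂ) * (μ * t) - μ ^ 2 * t).re = (cR * μ.re - μ.re ^ 2) * t.re := by
      simp only [Complex.sub_re, Complex.mul_re, Complex.mul_im, Complex.ofReal_re,
        Complex.ofReal_im, htim, hmuim, e1, e2]
      ring
    rwa [e] at h2re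
  by_contra hgt
  push_neg at hgt
  have hmupos : 0 < μ.re := hcR.trans hgt
  have hneg : (cR * μ.re - μ.re ^ 2) * t.re < 0 := by
    apply mul_neg_of_neg_of_pos _ htpos
    nlinarith [mul_lt_mul_of_pos_left hgt hmupos]
  linarith [h2re']
end

section
/- Let A be a real symmetric positive definite n×n matrix, B a real symmetric positive definite m×m matrix, and R an n×m real matrix such that for some c_T > 0 and for every u ∈ ℝⁿ there exists u_P ∈ ℝᵐ with R u_P = u and c_T · (u_Pᵀ B u_P) ≤ uᵀ A u. Then R is surjective, R B⁻¹ Rᵀ is symmetric positive definite, and every eigenvalue of (R B⁻¹ Rᵀ) A is at least c_T. -/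
open Matrix ComplexOrder

private lemma symm_dot {n : ℕ} {A : Matrix (Fin n) (Fin n) ℝ} (hA : A.IsHermitian)
    (x z : Fin n → ℝ) : x ⬝ᵥ A *ᵥ z = (A *ᵥ x) ⬝ᵥ z := by
  have hT : Aᵀ = A := by
    conv_rhs => rw [← hA.eq]
    ext i j
    simp [conjTranspose_apply]
  rw [dotProduct_mulVec, ← mulVec_transpose, hT]

private lemma quad_lower {m : ℕ} {B : Matrix (Fin m) (Fin m) ℝ} (hB : B.PosDef)
    (x w : Fin m → ℝ) :
    2 * (x ⬝ᵥ w) - w ⬝ᵥ B *ᵥ w ≤ x ⬝ᵥ B⁻¹ *ᵥ x := by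
  classical
  have hBd : IsUnit B.det := (Matrix.isUnit_iff_isUnit_det _).mp hB.isUnit
  have hBB : B *ᵥ (B⁻¹ *ᵥ x) = x := by
    rw [mulVec_mulVec, Matrix.mul_nonsing_inv _ hBd, one_mulVec]
  set z : Fin m → ℝ := B⁻¹ *ᵥ x - w with hz
  have h0 : 0 ≤ z ⬝ᵥ B *ᵥ z := by
    simpa using hB.posSemidef.dotProduct_mulVec_nonneg z
  have h1 : (B⁻¹ *ᵥ x) ⬝ᵥ B *ᵥ w = x ⬝ᵥ w := by
    rw [symm_dot hB.isHermitian, hBB]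
  have h2 : w ⬝ᵥ B *ᵥ (B⁻¹ *ᵥ x) = x ⬝ᵥ w := by
    rw [hBB, dotProduct_comm]
  have h3 : (B⁻¹ *ᵥ x) ⬝ᵥ B *ᵥ (B⁻¹ *ᵥ x) = x ⬝ᵥ B⁻¹ *ᵥ x := by
    rw [symm_dot hB.isHermitian, hBB]
  have hexp : z ⬝ᵥ B *ᵥ z
      = x ⬝ᵥ B⁻¹ *ᵥ x - 2 * (x ⬝ᵥ w) + w ⬝ᵥ B *ᵥ w := by
    rw [hz]
    rw [mulVec_sub, sub_dotProduct, dotProduct_sub, dotProduct_sub, h1, h2, h3]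
    ring
  linarith [hexp ▸ h0]

/-- **Stable decomposition implies the lower spectral bound (fictitious space lemma,
lower part).** If `A`, `B` are SPD and every `u` admits a decomposition `u = R u_P` with
`c_T · u_Pᵀ B u_P ≤ uᵀ A u`, then `R` is surjective, `R B⁻¹ Rᵀ` is SPD, and every
eigenvalue of `(R B⁻¹ Rᵀ) A` is (real and) at least `c_T`. -/
theorem fictitious_space_lower_bound {n m : ℕ}
    (A : Matrix (Fin n) (Fin n) ℝ) (hA : A.PosDef)
    (B : Matrix (Fin m) (Fin m) ℝ) (hB : B.PosDef)
    (R : Matrix (Fin n) (Fin m) ℝ)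
    (cT : ℝ) (hcT : 0 < cT)
    (hstab : ∀ u : Fin n → ℝ, ∃ uP : Fin m → ℝ,
      R *ᵥ uP = u ∧ cT * (uP ⬝ᵥ B *ᵥ uP) ≤ u ⬝ᵥ A *ᵥ u) :
    Function.Surjective (fun uP : Fin m → ℝ => R *ᵥ uP) ∧
    (R * B⁻¹ * Rᵀ).PosDef ∧
    ∀ (μ : ℂ) (v : Fin n → ℂ), v ≠ 0 →
      ((R * B⁻¹ * Rᵀ) * A).map Complex.ofReal *ᵥ v = μ • v →
      μ.im = 0 ∧ cT ≤ μ.re := by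
  classical
  set M : Matrix (Fin n) (Fin n) ℝ := R * B⁻¹ * Rᵀ with hMdef
  have hAd : IsUnit A.det := (Matrix.isUnit_iff_isUnit_det _).mp hA.isUnit
  have hAAinv : ∀ v : Fin n → ℝ, A *ᵥ (A⁻¹ *ᵥ v) = v := fun v => by
    rw [mulVec_mulVec, Matrix.mul_nonsing_inv _ hAd, one_mulVec]
  have hAinvA : ∀ v : Fin n → ℝ, A⁻¹ *ᵥ (A *ᵥ v) = v := fun v => by
    rw [mulVec_mulVec, Matrix.nonsing_inv_mul _ hAd, one_mulVec]
  -- key inequality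
  have key : ∀ v : Fin n → ℝ, cT * (v ⬝ᵥ A⁻¹ *ᵥ v) ≤ v ⬝ᵥ M *ᵥ v := by
    intro v
    obtain ⟨uP, h1, h2⟩ := hstab (A⁻¹ *ᵥ v)
    rw [hAAinv v] at h2
    have hS : (A⁻¹ *ᵥ v) ⬝ᵥ v = v ⬝ᵥ A⁻¹ *ᵥ v := dotProduct_comm _ _
    rw [hS] at h2
    have haux := quad_lower hB (Rᵀ *ᵥ v) (cT • uP)
    have hxw : (Rᵀ *ᵥ v) ⬝ᵥ (cT • uP) = cT * (v ⬝ᵥ A⁻¹ *ᵥ v) := by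
      rw [dotProduct_smul, mulVec_transpose, ← dotProduct_mulVec, h1]
      simp [smul_eq_mul]
    have hww : (cT • uP) ⬝ᵥ B *ᵥ (cT • uP) = cT * cT * (uP ⬝ᵥ B *ᵥ uP) := by
      rw [smul_dotProduct, mulVec_smul, dotProduct_smul]
      simp only [smul_eq_mul]
      ring
    have hxx : (Rᵀ *ᵥ v) ⬝ᵥ B⁻¹ *ᵥ (Rᵀ *ᵥ v) = v ⬝ᵥ M *ᵥ v := by
      rw [hMdef, Matrix.mul_assoc, ← mulVec_mulVec, ← mulVec_mulVec]
      rw [mulVec_transpose, ← dotProduct_mulVec]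
    rw [hxw, hww, hxx] at haux
    nlinarith [hB.posSemidef.dotProduct_mulVec_nonneg uP, hcT.le]
  -- surjectivity
  have hsurj : Function.Surjective (fun uP : Fin m → ℝ => R *ᵥ uP) := by
    intro u
    obtain ⟨uP, h1, _⟩ := hstab u
    exact ⟨uP, h1⟩
  -- M hermitian
  have hMsym : M.IsHermitian := by
    have h1 : (B⁻¹).IsHermitian := hB.isHermitian.inv
    rw [hMdef]
    unfold Matrix.IsHermitian
    rw [conjTranspose_mul, conjTranspose_mul, h1.eq]
    have hR : Rᴴ = Rᵀ := rfl
    have hRT : (Rᵀ)ᴴ = R := by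
      rw [← transpose_transpose Rᵀ]; rfl
    rw [hR, hRT, Matrix.mul_assoc]
  -- M PosDef
  have hMpd : M.PosDef := by
    refine Matrix.PosDef.of_dotProduct_mulVec_pos hMsym (fun x hx => ?_)
    have h1 := key x
    have h2 := hA.inv.dotProduct_mulVec_pos hx
    simp only [star_trivial] at h2 ⊢
    nlinarith
  refine ⟨hsurj, hMpd, ?_⟩
  -- the D matrix
  set D : Matrix (Fin n) (Fin n) ℝ := A * M * A - cT • A with hDdef
  have hDsym : D.IsHermitian := by
    refine Matrix.IsHermitian.sub ?_ ?_
    · unfold Matrix.IsHermitian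
      rw [conjTranspose_mul, conjTranspose_mul, hMsym.eq, hA.isHermitian.eq]
      simp [hMdef, Matrix.mul_assoc]
    · unfold Matrix.IsHermitian
      rw [conjTranspose_smul, hA.isHermitian.eq, star_trivial]
  have hDpsd : D.PosSemidef := by
    refine Matrix.PosSemidef.of_dotProduct_mulVec_nonneg hDsym (fun x => ?_)
    simp only [star_trivial]
    have h1 := key (A *ᵥ x)
    rw [hAinvA x] at h1
    have hDx : x ⬝ᵥ D *ᵥ x
        = (A *ᵥ x) ⬝ᵥ M *ᵥ (A *ᵥ x) - cT * (x ⬝ᵥ A *ᵥ x) := by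
      rw [hDdef, sub_mulVec, dotProduct_sub, smul_mulVec, dotProduct_smul,
        Matrix.mul_assoc, ← mulVec_mulVec, symm_dot hA.isHermitian x, mulVec_mulVec]
      simp [smul_eq_mul]
    rw [hDx]
    have h2 : (A *ᵥ x) ⬝ᵥ x = x ⬝ᵥ A *ᵥ x := dotProduct_comm _ _
    linarith [h2 ▸ h1]
  -- complex maps
  have hmapmul : ∀ {k l p : ℕ} (X : Matrix (Fin k) (Fin l) ℝ) (Y : Matrix (Fin l) (Fin p) ℝ),
      (X * Y).map Complex.ofReal = X.map Complex.ofReal * Y.map Complex.ofReal := by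
    intro k l p X Y
    exact Matrix.map_mul (f := Complex.ofRealHom)
  have hmapCT : ∀ {k l : ℕ} (X : Matrix (Fin k) (Fin l) ℝ),
      (Xᴴ).map Complex.ofReal = (X.map Complex.ofReal)ᴴ := by
    intro k l X
    exact Matrix.conjTranspose_map Complex.ofReal (fun a => by simp)
  have hApsdC : (A.map Complex.ofReal).PosSemidef := by
    open scoped MatrixOrder in
    obtain ⟨E, hE⟩ := CStarAlgebra.nonneg_iff_eq_star_mul_self.mp hA.posSemidef.nonneg
    rw [star_eq_conjTranspose] at hE
    rw [hE, hmapmul, hmapCT]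
    exact posSemidef_conjTranspose_mul_self _
  have hDpsdC : (D.map Complex.ofReal).PosSemidef := by
    open scoped MatrixOrder in
    obtain ⟨C, hC⟩ := CStarAlgebra.nonneg_iff_eq_star_mul_self.mp hDpsd.nonneg
    rw [star_eq_conjTranspose] at hC
    rw [hC, hmapmul, hmapCT]
    exact posSemidef_conjTranspose_mul_self _
  have hACunit : IsUnit (A.map Complex.ofReal) := by
    rw [Matrix.isUnit_iff_isUnit_det]
    have : (A.map Complex.ofReal).det = Complex.ofReal A.det := by
      exact (RingHom.map_det Complex.ofRealHom A).symm
    rw [this]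
    simp only [isUnit_iff_ne_zero, ne_eq, Complex.ofReal_eq_zero]
    exact hA.det_pos.ne'
  intro μ v hv heig
  set AC := A.map Complex.ofReal with hACdef
  set α : ℂ := star v ⬝ᵥ AC *ᵥ v with hαdef
  have hα0 : 0 ≤ α := hApsdC.dotProduct_mulVec_nonneg v
  have hαne : α ≠ 0 := by
    intro h
    have h2 : AC *ᵥ v = 0 := (hApsdC.dotProduct_mulVec_zero_iff v).mp h
    have := Matrix.mulVec_injective_iff_isUnit.mpr hACunit
    apply hv
    apply this
    rw [h2, mulVec_zero]
  -- compute D map mulVec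
  have hDmap : D.map Complex.ofReal *ᵥ v = (μ - (cT : ℂ)) • (AC *ᵥ v) := by
    have hD2 : D = A * (M * A) - cT • A := by rw [hDdef, Matrix.mul_assoc]
    have hmapsub : D.map Complex.ofReal
        = AC * ((M * A).map Complex.ofReal) - (cT : ℂ) • AC := by
      rw [hD2]
      ext i j
      simp [Matrix.map_apply, Matrix.sub_apply, Matrix.smul_apply, Matrix.mul_apply,
        hACdef]
    rw [hmapsub, sub_mulVec, smul_mulVec, ← mulVec_mulVec, heig, mulVec_smul,
      sub_smul]
  have hd : star v ⬝ᵥ D.map Complex.ofReal *ᵥ v = (μ - (cT : ℂ)) * α := by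
    rw [hDmap, dotProduct_smul, hαdef, smul_eq_mul]
  have hd0 : 0 ≤ (μ - (cT : ℂ)) * α := hd ▸ hDpsdC.dotProduct_mulVec_nonneg v
  rw [Complex.le_def] at hα0 hd0
  simp only [Complex.zero_re, Complex.zero_im] at hα0 hd0
  have hαre : 0 < α.re := by
    rcases lt_or_eq_of_le hα0.1 with h | h
    · exact h
    · exfalso; apply hαne; apply Complex.ext <;> simp [← h, ← hα0.2]
  have him : ((μ - (cT : ℂ)) * α).im = μ.im * α.re := by
    simp [Complex.mul_im, Complex.sub_im, Complex.sub_re, ← hα0.2]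
  have hre : ((μ - (cT : ℂ)) * α).re = (μ.re - cT) * α.re := by
    simp [Complex.mul_re, Complex.sub_im, Complex.sub_re, ← hα0.2]
  constructor
  · have := hd0.2
    rw [him] at this
    have := mul_eq_zero.mp this.symm
    rcases this with h | h
    · exact h
    · exact absurd h hαre.ne'
  · have := hd0.1
    rw [hre] at this
    nlinarith
end

section
/- Let A be a real symmetric positive definite n×n matrix, b ∈ ℝⁿ, x̄ := A⁻¹b, x₀ ∈ ℝⁿ, r₀ := b − A x₀, and κ := λ_max(A)/λ_min(A). For m ≥ 1 let K_m := span{r₀, A r₀, …, A^{m−1} r₀}, and let x_m be any minimizer of ‖x̄ − x‖_A over the affine subspace x₀ + K_m (this characterizes the m-th conjugate gradient iterate). Then ‖x̄ − x_m‖_A ≤ 2 · ((√κ − 1)/(√κ + 1))^m · ‖x̄ − x₀‖_A, where ‖v‖_A := √(vᵀ A v). -/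
open Matrix Polynomial Polynomial.Chebyshev

lemma sum_dotProduct' {n : ℕ} {ι : Type*} (s : Finset ι) (f : ι → (Fin n → ℝ)) (w : Fin n → ℝ) :
    (∑ i ∈ s, f i) ⬝ᵥ w = ∑ i ∈ s, f i ⬝ᵥ w := by
  simp only [dotProduct, Finset.sum_apply, Finset.sum_mul]
  exact Finset.sum_comm

lemma dotProduct_sum' {n : ℕ} {ι : Type*} (s : Finset ι) (w : Fin n → ℝ) (f : ι → (Fin n → ℝ)) :
    w ⬝ᵥ (∑ i ∈ s, f i) = ∑ i ∈ s, w ⬝ᵥ f i := by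
  simp only [dotProduct, Finset.sum_apply, Finset.mul_sum]
  exact Finset.sum_comm

lemma mulVec_sum' {n : ℕ} {ι : Type*} (s : Finset ι) (A : Matrix (Fin n) (Fin n) ℝ)
    (f : ι → (Fin n → ℝ)) : A *ᵥ (∑ i ∈ s, f i) = ∑ i ∈ s, A *ᵥ f i := by
  rw [← Matrix.mulVecLin_apply, map_sum]; simp [Matrix.mulVecLin_apply]

lemma sum_mulVec' {n : ℕ} {ι : Type*} (s : Finset ι) (M : ι → Matrix (Fin n) (Fin n) ℝ)
    (v : Fin n → ℝ) : (∑ i ∈ s, M i) *ᵥ v = ∑ i ∈ s, M i *ᵥ v := by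
  classical
  induction s using Finset.induction with
  | empty => simp [Matrix.zero_mulVec]
  | insert a s h ih => rw [Finset.sum_insert h, Finset.sum_insert h, Matrix.add_mulVec, ih]

lemma pow_mulVec_eigen {n : ℕ} (A : Matrix (Fin n) (Fin n) ℝ) {v : Fin n → ℝ} {μ : ℝ}
    (hv : A *ᵥ v = μ • v) (k : ℕ) : (A ^ k) *ᵥ v = μ ^ k • v := by
  induction k with
  | zero => simp
  | succ k ih =>
    rw [pow_succ, ← Matrix.mulVec_mulVec, hv, Matrix.mulVec_smul, ih, smul_smul, pow_succ]
    ring_nf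

lemma aeval_mulVec_eigen {n : ℕ} (A : Matrix (Fin n) (Fin n) ℝ) {v : Fin n → ℝ} {μ : ℝ}
    (hv : A *ᵥ v = μ • v) (p : Polynomial ℝ) :
    (Polynomial.aeval A p) *ᵥ v = p.eval μ • v := by
  induction p using Polynomial.induction_on' with
  | add p q hp hq => rw [map_add, Matrix.add_mulVec, hp, hq, eval_add, add_smul]
  | monomial k a =>
    rw [aeval_monomial, eval_monomial, Algebra.algebraMap_eq_smul_one, smul_mul_assoc,
      one_mul, Matrix.smul_mulVec, pow_mulVec_eigen A hv, smul_smul]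

lemma qform_expand {n : ℕ} {A : Matrix (Fin n) (Fin n) ℝ} (hH : A.IsHermitian) (d : Fin n → ℝ) :
    (∑ i, d i • ⇑(hH.eigenvectorBasis i)) ⬝ᵥ A *ᵥ (∑ i, d i • ⇑(hH.eigenvectorBasis i))
      = ∑ i, hH.eigenvalues i * d i ^ 2 := by
  have horth : ∀ i j, ⇑(hH.eigenvectorBasis i) ⬝ᵥ ⇑(hH.eigenvectorBasis j)
      = if i = j then 1 else 0 := by
    intro i j
    have h := orthonormal_iff_ite.mp (hH.eigenvectorBasis.orthonormal) i j
    simpa [PiLp.inner_apply, dotProduct, mul_comm] using h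
  have hAv : A *ᵥ (∑ i, d i • ⇑(hH.eigenvectorBasis i))
      = ∑ j, (d j * hH.eigenvalues j) • ⇑(hH.eigenvectorBasis j) := by
    rw [mulVec_sum']
    refine Finset.sum_congr rfl fun j _ => ?_
    rw [Matrix.mulVec_smul, hH.mulVec_eigenvectorBasis, smul_smul]
  rw [hAv, sum_dotProduct']
  refine Finset.sum_congr rfl fun i _ => ?_
  rw [smul_dotProduct, dotProduct_sum']
  rw [Finset.sum_eq_single i]
  · rw [dotProduct_smul, horth i i, if_pos rfl]
    simp; ring
  · intro j _ hj
    rw [dotProduct_smul, horth i j, if_neg (Ne.symm hj)]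
    simp
  · intro h; simp at h

lemma cheb_rec (x c dd : ℝ) (hc : c + dd = 2 * x) (hcd : c * dd = 1) (k : ℕ) :
    c ^ (k+2) + dd ^ (k+2) = 2 * x * (c ^ (k+1) + dd ^ (k+1)) - (c ^ k + dd ^ k) := by
  have h1 : c ^ (k+2) + dd ^ (k+2)
      = (c + dd) * (c ^ (k+1) + dd ^ (k+1)) - (c * dd) * (c ^ k + dd ^ k) := by ring
  rw [h1, hc, hcd]; ring

lemma T_eval_formula {x : ℝ} (hx : 1 ≤ x) (k : ℕ) :
    (Polynomial.Chebyshev.T ℝ k).eval x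
      = ((x + Real.sqrt (x^2 - 1)) ^ k + (x - Real.sqrt (x^2 - 1)) ^ k) / 2 := by
  set s := Real.sqrt (x^2 - 1) with hs
  have hs2 : s ^ 2 = x ^ 2 - 1 := Real.sq_sqrt (by nlinarith)
  set c := x + s
  set dd := x - s
  have hc : c + dd = 2 * x := by ring
  have hcd : c * dd = 1 := by simp only [c, dd]; nlinarith [hs2]
  suffices h : ∀ j : ℕ, (T ℝ j).eval x = (c ^ j + dd ^ j) / 2 ∧
      (T ℝ (j+1)).eval x = (c ^ (j+1) + dd ^ (j+1)) / 2 from (h k).1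
  intro j
  induction j with
  | zero => constructor <;> simp [T_zero, T_one] <;> ring
  | succ j ih =>
    refine ⟨ih.2, ?_⟩
    have hcast : ((j:ℤ) + 1 + 1 : ℤ) = (j : ℤ) + 2 := by ring
    have hrec := Polynomial.Chebyshev.T_add_two ℝ (j : ℤ)
    have heq : (T ℝ ((j:ℤ)+2)).eval x = 2 * x * (T ℝ ((j:ℤ)+1)).eval x - (T ℝ (j:ℤ)).eval x := by
      rw [hrec]; simp [eval_mul, eval_sub]
    push_cast
    rw [show ((j:ℤ) + 1 + 1 : ℤ) = (j:ℤ) + 2 by ring, heq]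
    push_cast at ih
    rw [ih.1, ih.2, cheb_rec x c dd hc hcd j]
    ring

lemma T_natDegree_le (k : ℕ) : (T ℝ k).natDegree ≤ k := by
  suffices h : ∀ j : ℕ, (T ℝ j).natDegree ≤ j ∧ (T ℝ (j+1)).natDegree ≤ j + 1 from (h k).1
  intro j
  induction j with
  | zero => constructor <;> simp [T_zero, T_one, natDegree_X_le]
  | succ j ih =>
    refine ⟨ih.2, ?_⟩
    rw [show ((j+1:ℕ) + 1 : ℤ) = (j:ℤ) + 2 by push_cast; ring, T_add_two]
    refine le_trans (natDegree_sub_le _ _) ?_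
    simp only [max_le_iff]
    constructor
    · refine le_trans (natDegree_mul_le) ?_
      have h1 : (2 * X : ℝ[X]).natDegree ≤ 1 := by
        refine le_trans (natDegree_mul_le) ?_
        simp [natDegree_X_le]
      have h2 := ih.2
      push_cast at h2 ⊢
      omega
    · exact le_trans ih.1 (by omega)

lemma T_abs_le {t : ℝ} (ht : t ∈ Set.Icc (-1:ℝ) 1) (k : ℕ) :
    |(T ℝ k).eval t| ≤ 1 := by
  obtain ⟨h1, h2⟩ := ht
  have h3 : t = Real.cos (Real.arccos t) := (Real.cos_arccos h1 h2).symm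
  rw [h3, Polynomial.Chebyshev.T_real_cos]
  exact Real.abs_cos_le_one _

set_option maxHeartbeats 2000000 in
/-- **Conjugate gradient convergence bound.**
Let `A` be SPD with condition number `κ = λ_max/λ_min`, `x̄ = A⁻¹b`, `r₀ = b − A x₀`,
`K_m` the `m`-th Krylov subspace, and `x_m` a minimizer of the energy-norm error over
`x₀ + K_m`. Then `‖x̄ − x_m‖_A ≤ 2 ((√κ − 1)/(√κ + 1))^m ‖x̄ − x₀‖_A`. -/
theorem cg_convergence_bound {n : ℕ}
    (A : Matrix (Fin n) (Fin n) ℝ) (hA : A.PosDef)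
    (b x0 xbar : Fin n → ℝ) (hxbar : xbar = A⁻¹ *ᵥ b)
    (r0 : Fin n → ℝ) (hr0 : r0 = b - A *ᵥ x0)
    (lmin lmax : ℝ)
    (hlmax : IsGreatest {μ : ℝ | ∃ v : Fin n → ℝ, v ≠ 0 ∧ A *ᵥ v = μ • v} lmax)
    (hlmin : IsLeast {μ : ℝ | ∃ v : Fin n → ℝ, v ≠ 0 ∧ A *ᵥ v = μ • v} lmin)
    (κ : ℝ) (hκ : κ = lmax / lmin)
    (m : ℕ) (hm : 1 ≤ m)
    (Km : Submodule ℝ (Fin n → ℝ))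
    (hKm : Km = Submodule.span ℝ {w : Fin n → ℝ | ∃ k < m, w = (A ^ k) *ᵥ r0})
    (xm : Fin n → ℝ)
    (hmem : ∃ k ∈ Km, xm = x0 + k)
    (hmin : ∀ y : Fin n → ℝ, (∃ k ∈ Km, y = x0 + k) →
      Real.sqrt ((xbar - xm) ⬝ᵥ A *ᵥ (xbar - xm)) ≤
        Real.sqrt ((xbar - y) ⬝ᵥ A *ᵥ (xbar - y))) :
    Real.sqrt ((xbar - xm) ⬝ᵥ A *ᵥ (xbar - xm)) ≤
      2 * ((Real.sqrt κ - 1) / (Real.sqrt κ + 1)) ^ m *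
        Real.sqrt ((xbar - x0) ⬝ᵥ A *ᵥ (xbar - x0)) := by
  have hH : A.IsHermitian := hA.1
  set B := hH.eigenvectorBasis with hB
  set lam := hH.eigenvalues with hlam
  -- positivity of lmin
  have hlminpos : 0 < lmin := by
    obtain ⟨v, hv0, hv⟩ := hlmin.1
    have h1 : 0 < v ⬝ᵥ A *ᵥ v := by
      have := hA.dotProduct_mulVec_pos hv0
      simpa using this
    have h2 : v ⬝ᵥ A *ᵥ v = lmin * (v ⬝ᵥ v) := by
      rw [hv, dotProduct_smul]; rfl
    have h3 : 0 < v ⬝ᵥ v := by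
      obtain ⟨j, hj⟩ := Function.ne_iff.mp hv0
      refine Finset.sum_pos' (fun i _ => mul_self_nonneg _) ⟨j, Finset.mem_univ j, ?_⟩
      exact mul_self_pos.mpr hj
    nlinarith
  -- eigenvector basis vectors are nonzero
  have hBne : ∀ i, (⇑(B i) : Fin n → ℝ) ≠ 0 := by
    intro i hzero
    have h1 : ‖B i‖ = 1 := B.orthonormal.1 i
    have : B i = 0 := by simpa using congrArg (WithLp.toLp 2) hzero
    rw [this] at h1; simp at h1
  -- eigenvalue bounds
  have heig : ∀ i, A *ᵥ ⇑(B i) = lam i • ⇑(B i) := fun i => hH.mulVec_eigenvectorBasis i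
  have hmem_spec : ∀ i, lam i ∈ {μ : ℝ | ∃ v : Fin n → ℝ, v ≠ 0 ∧ A *ᵥ v = μ • v} :=
    fun i => ⟨⇑(B i), hBne i, heig i⟩
  have hlo : ∀ i, lmin ≤ lam i := fun i => hlmin.2 (hmem_spec i)
  have hhi : ∀ i, lam i ≤ lmax := fun i => hlmax.2 (hmem_spec i)
  -- invertibility / residual
  have hAxbar : A *ᵥ xbar = b := by
    rw [hxbar, Matrix.mulVec_mulVec, Matrix.mul_nonsing_inv _ (isUnit_iff_ne_zero.mpr hA.det_pos.ne'),
      Matrix.one_mulVec]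
  set e0 : Fin n → ℝ := xbar - x0 with he0def
  have hre : A *ᵥ e0 = r0 := by
    rw [he0def, Matrix.mulVec_sub, hAxbar, hr0]
  -- expansion of e0 in eigenbasis
  set d : Fin n → ℝ := fun i => B.repr ((WithLp.equiv 2 (Fin n → ℝ)).symm e0) i with hd
  have he0 : e0 = ∑ i, d i • ⇑(B i) := by
    have h := B.sum_repr ((WithLp.equiv 2 (Fin n → ℝ)).symm e0)
    have h2 := congrArg (WithLp.ofLp) h
    simp only [WithLp.ofLp_sum, WithLp.ofLp_smul] at h2
    exact h2.symm
  -- key quadratic form identity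
  have key : ∀ p : Polynomial ℝ,
      ((Polynomial.aeval A p) *ᵥ e0) ⬝ᵥ A *ᵥ ((Polynomial.aeval A p) *ᵥ e0)
        = ∑ i, lam i * (d i * p.eval (lam i)) ^ 2 := by
    intro p
    have hw : (Polynomial.aeval A p) *ᵥ e0 = ∑ i, (d i * p.eval (lam i)) • ⇑(B i) := by
      rw [he0, mulVec_sum']
      refine Finset.sum_congr rfl fun i _ => ?_
      rw [Matrix.mulVec_smul, aeval_mulVec_eigen A (heig i) p, smul_smul, mul_comm]
    rw [hw, qform_expand hH]
  have keyQ : e0 ⬝ᵥ A *ᵥ e0 = ∑ i, lam i * d i ^ 2 := by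
    have := key 1
    simpa using this
  -- main bound given a polynomial p with p(0)=1, natDegree ≤ m, |p| ≤ C on eigenvalues
  have main : ∀ (p : Polynomial ℝ) (C : ℝ), 0 ≤ C → p.natDegree ≤ m → p.eval 0 = 1 →
      (∀ i, |p.eval (lam i)| ≤ C) →
      Real.sqrt ((xbar - xm) ⬝ᵥ A *ᵥ (xbar - xm)) ≤
        C * Real.sqrt ((xbar - x0) ⬝ᵥ A *ᵥ (xbar - x0)) := by
    intro p C hC hdeg hp0 hpb
    -- build candidate y
    set q1 : Polynomial ℝ := 1 - p with hq1
    have hq1c : q1.coeff 0 = 0 := by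
      rw [Polynomial.coeff_zero_eq_eval_zero]; simp [hq1, hp0]
    have hq1X : q1 = Polynomial.X * q1.divX := by
      conv_lhs => rw [← Polynomial.X_mul_divX_add q1]
      rw [hq1c]; simp
    set s : Polynomial ℝ := q1.divX with hs
    have hsdeg : s.natDegree < m := by
      have h1 : q1.natDegree ≤ m := le_trans (Polynomial.natDegree_sub_le _ _) (by
        simp only [Polynomial.natDegree_one]; omega)
      have h2 : s.natDegree = q1.natDegree - 1 := Polynomial.natDegree_divX_eq_natDegree_tsub_one
      omega
    set k : Fin n → ℝ := (Polynomial.aeval A s) *ᵥ r0 with hk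
    have hkmem : k ∈ Km := by
      rw [hKm, hk]
      rw [Polynomial.aeval_eq_sum_range, sum_mulVec']
      refine Submodule.sum_mem _ fun i hi => ?_
      rw [Matrix.smul_mulVec]
      refine Submodule.smul_mem _ _ (Submodule.subset_span ?_)
      refine ⟨i, ?_, rfl⟩
      simp only [Finset.mem_range] at hi
      omega
    have herr : xbar - (x0 + k) = (Polynomial.aeval A p) *ᵥ e0 := by
      have h1 : (Polynomial.aeval A p) *ᵥ e0 = e0 - (Polynomial.aeval A q1) *ᵥ e0 := by
        have : p = 1 - q1 := by rw [hq1]; ring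
        rw [this, map_sub, _root_.map_one, Matrix.sub_mulVec, Matrix.one_mulVec]
      have h2 : (Polynomial.aeval A q1) *ᵥ e0 = k := by
        rw [hq1X, show Polynomial.X * q1.divX = q1.divX * Polynomial.X by ring, _root_.map_mul,
          Polynomial.aeval_X, ← Matrix.mulVec_mulVec, hre, hk]
      rw [h1, h2, he0def]
      abel
    have hy := hmin (x0 + k) ⟨k, hkmem, rfl⟩
    rw [herr] at hy
    refine le_trans hy ?_
    -- now bound sqrt of Q(p(A) e0)
    rw [key p]
    have hsum : ∑ i, lam i * (d i * p.eval (lam i)) ^ 2 ≤ C^2 * ((xbar - x0) ⬝ᵥ A *ᵥ (xbar - x0)) := by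
      rw [show xbar - x0 = e0 from rfl, keyQ, Finset.mul_sum]
      refine Finset.sum_le_sum fun i _ => ?_
      have hli : 0 < lam i := lt_of_lt_of_le hlminpos (hlo i)
      have hb := hpb i
      have habs : (p.eval (lam i))^2 ≤ C^2 := by nlinarith [abs_nonneg (p.eval (lam i)), sq_abs (p.eval (lam i))]
      have h5 : (lam i * d i ^ 2) * (p.eval (lam i))^2 ≤ (lam i * d i ^ 2) * C^2 :=
        mul_le_mul_of_nonneg_left habs (by positivity)
      calc lam i * (d i * p.eval (lam i)) ^ 2 = (lam i * d i ^ 2) * (p.eval (lam i))^2 := by ring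
        _ ≤ (lam i * d i ^ 2) * C^2 := h5
        _ = C^2 * (lam i * d i ^ 2) := by ring
    calc Real.sqrt (∑ i, lam i * (d i * p.eval (lam i)) ^ 2)
        ≤ Real.sqrt (C^2 * ((xbar - x0) ⬝ᵥ A *ᵥ (xbar - x0))) := Real.sqrt_le_sqrt hsum
      _ = C * Real.sqrt ((xbar - x0) ⬝ᵥ A *ᵥ (xbar - x0)) := by
          rw [Real.sqrt_mul (sq_nonneg C), Real.sqrt_sq hC]
  -- case split
  rcases eq_or_lt_of_le (hlmin.2 hlmax.1) with heq | hlt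
  · -- lmin = lmax : κ = 1, RHS = 0
    have hall : ∀ i, lam i = lmin := fun i => le_antisymm (heq ▸ hhi i) (hlo i)
    have hAe0 : A *ᵥ e0 = lmin • e0 := by
      rw [he0, mulVec_sum', Finset.smul_sum]
      refine Finset.sum_congr rfl fun i _ => ?_
      rw [Matrix.mulVec_smul, heig i, hall i, smul_smul, smul_smul, mul_comm]
    have he0mem : e0 ∈ Km := by
      have hr0e : r0 = lmin • e0 := by rw [← hre, hAe0]
      have : e0 = lmin⁻¹ • r0 := by
        rw [hr0e, smul_smul, inv_mul_cancel₀ hlminpos.ne', one_smul]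
      rw [this, hKm]
      exact Submodule.smul_mem _ _ (Submodule.subset_span ⟨0, hm, by simp⟩)
    have hy := hmin (x0 + e0) ⟨e0, he0mem, rfl⟩
    have hxy : xbar - (x0 + e0) = 0 := by rw [he0def]; abel
    rw [hxy] at hy
    simp only [Matrix.mulVec_zero, dotProduct_zero, Real.sqrt_zero] at hy
    have hκ1 : κ = 1 := by rw [hκ, heq, div_self (lt_of_lt_of_le hlminpos heq.le).ne']
    rw [hκ1]
    simp only [Real.sqrt_one, sub_self, zero_div, zero_pow (by omega : m ≠ 0), mul_zero, zero_mul]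
    exact hy
  · -- lmin < lmax
    set g : ℝ := lmax - lmin with hg
    have hgpos : 0 < g := by simp [hg]; linarith
    have hκ1 : 1 < κ := by rw [hκ]; rw [lt_div_iff₀ hlminpos]; linarith
    have hκpos : 0 < κ := lt_trans one_pos hκ1
    set sq : ℝ := Real.sqrt κ with hsq
    have hsq1 : 1 < sq := by
      rw [hsq, show (1:ℝ) = Real.sqrt 1 by simp]
      exact Real.sqrt_lt_sqrt (by norm_num) hκ1
    have hsqsq : sq ^ 2 = κ := Real.sq_sqrt hκpos.le
    set σ : ℝ := (lmax + lmin) / g with hσ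
    have hσκ : σ = (κ + 1) / (κ - 1) := by
      have h1 : lmin ≠ 0 := hlminpos.ne'
      have h2 : lmax - lmin ≠ 0 := by linarith
      have h3 : lmax / lmin - 1 ≠ 0 := by
        rw [← hκ]; linarith
      rw [hσ, hκ, hg]
      field_simp
    have hσ1 : 1 < σ := by
      rw [hσ, lt_div_iff₀ hgpos, hg]; linarith
    set c : ℝ := (sq + 1) / (sq - 1) with hc
    have hc1 : 1 < c := by
      rw [hc, lt_div_iff₀ (by linarith)]; linarith
    have hcpos : 0 < c := lt_trans one_pos hc1
    set ρ : ℝ := (sq - 1) / (sq + 1) with hρ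
    have hρc : ρ = c⁻¹ := by rw [hρ, hc]; field_simp
    have hρnn : 0 ≤ ρ := by rw [hρ]; apply div_nonneg <;> linarith
    -- sqrt(σ²-1) and σ + sqrt = c
    have hκne : κ - 1 ≠ 0 := by linarith
    have hσ2 : σ ^ 2 - 1 = (2 * sq / (κ - 1)) ^ 2 := by
      have h4 : (2 * sq / (κ - 1)) ^ 2 = (4 * κ) / (κ - 1) ^ 2 := by
        rw [div_pow, ← hsqsq]; congr 1; ring
      rw [hσκ, div_pow, div_sub_one (pow_ne_zero 2 hκne), h4]
      congr 1; ring
    have hsσ : Real.sqrt (σ ^ 2 - 1) = 2 * sq / (κ - 1) := by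
      have h9 : (0:ℝ) ≤ 2 * sq / (κ - 1) := div_nonneg (by positivity) (by linarith)
      rw [hσ2, Real.sqrt_sq h9]
    have hsq1ne : sq - 1 ≠ 0 := by linarith
    have hsq2ne : sq + 1 ≠ 0 := by linarith
    have hσc : σ + Real.sqrt (σ ^ 2 - 1) = c := by
      rw [hsσ, hσκ, hc, ← add_div, div_eq_div_iff hκne hsq1ne]
      linear_combination 2 * hsqsq
    have hσd : σ - Real.sqrt (σ ^ 2 - 1) = c⁻¹ := by
      have hs2 : Real.sqrt (σ ^ 2 - 1) ^ 2 = σ ^ 2 - 1 := Real.sq_sqrt (by nlinarith)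
      have hprod : c * (σ - Real.sqrt (σ ^ 2 - 1)) = 1 := by
        rw [← hσc]
        linear_combination -1 * hs2
      have := eq_inv_of_mul_eq_one_left (a := σ - Real.sqrt (σ ^ 2 - 1)) (b := c)
        (by linear_combination hprod)
      exact this
    -- T_m(σ) lower bound
    set Tσ : ℝ := (T ℝ (m : ℤ)).eval σ with hTσdef
    have hTσ : c ^ m / 2 ≤ Tσ := by
      rw [hTσdef, T_eval_formula hσ1.le, hσc, hσd]
      have : 0 ≤ (c⁻¹) ^ m := by positivity
      linarith
    have hTσpos : 0 < Tσ := lt_of_lt_of_le (by positivity) hTσ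
    -- the Chebyshev polynomial candidate
    set p : Polynomial ℝ := Polynomial.C Tσ⁻¹ *
      ((T ℝ (m : ℤ)).comp (Polynomial.C σ - Polynomial.C (2 / g) * Polynomial.X)) with hp
    have hpeval : ∀ t : ℝ, p.eval t = Tσ⁻¹ * (T ℝ (m : ℤ)).eval (σ - (2 / g) * t) := by
      intro t; rw [hp]; simp [Polynomial.eval_comp]
    have hp0 : p.eval 0 = 1 := by
      rw [hpeval]; simp [inv_mul_cancel₀ hTσpos.ne']; exact inv_mul_cancel₀ hTσpos.ne'
    have hpdeg : p.natDegree ≤ m := by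
      rw [hp]
      refine le_trans (Polynomial.natDegree_C_mul_le _ _) ?_
      refine le_trans (Polynomial.natDegree_comp_le) ?_
      have h1 : (Polynomial.C σ - Polynomial.C (2 / g) * Polynomial.X : ℝ[X]).natDegree ≤ 1 := by
        refine le_trans (Polynomial.natDegree_sub_le _ _) ?_
        simp only [Polynomial.natDegree_C, max_le_iff]
        exact ⟨by omega, le_trans (Polynomial.natDegree_C_mul_le _ _) Polynomial.natDegree_X_le⟩
      calc (T ℝ (m:ℤ)).natDegree * (Polynomial.C σ - Polynomial.C (2 / g) * Polynomial.X).natDegree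
          ≤ m * 1 := Nat.mul_le_mul (T_natDegree_le m) h1
        _ = m := by omega
    have hpb : ∀ i, |p.eval (lam i)| ≤ 2 * ρ ^ m := by
      intro i
      rw [hpeval]
      have harg : σ - (2 / g) * lam i ∈ Set.Icc (-1:ℝ) 1 := by
        have h1 := hlo i; have h2 := hhi i
        have hform : σ - (2 / g) * lam i = (lmax + lmin - 2 * lam i) / g := by
          rw [hσ]
          field_simp
        constructor
        · rw [hform, le_div_iff₀ hgpos, hg]; linarith
        · rw [hform, div_le_one hgpos, hg]; linarith
      have hT1 := T_abs_le harg m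
      rw [abs_mul, abs_of_pos (inv_pos.mpr hTσpos)]
      have h3 : Tσ⁻¹ * |(T ℝ (m:ℤ)).eval (σ - 2 / g * lam i)| ≤ Tσ⁻¹ * 1 := by
        exact mul_le_mul_of_nonneg_left hT1 (by positivity)
      refine le_trans h3 ?_
      rw [mul_one]
      have h4 : Tσ⁻¹ ≤ (c ^ m / 2)⁻¹ := by
        exact inv_anti₀ (by positivity) hTσ
      refine le_trans h4 ?_
      rw [hρc, inv_pow, inv_div]
      ring_nf
      exact le_refl _
    exact main p (2 * ρ ^ m) (by positivity) hpdeg hp0 hpb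
end

section
/- For all real numbers 0 < a ≤ b and every natural number m, there exists a real polynomial p of degree at most m with p(0) = 1 such that |p(t)| ≤ 2 · ((√κ − 1)/(√κ + 1))^m for all t ∈ [a, b], where κ := b/a. -/
open Polynomial Polynomial.Chebyshev


lemma cheb_natDegree_le : ∀ n : ℕ, (T ℝ (n : ℤ)).natDegree ≤ n := by
  intro n
  induction n using Nat.twoStepInduction with
  | zero => simp [T_zero]
  | one => simp [T_one]
  | more n ih1 ih2 =>
    have h : ((n : ℤ) + 2) = ((n + 2 : ℕ) : ℤ) := by push_cast; ring
    rw [← h, T_add_two]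
    refine le_trans (natDegree_sub_le _ _) ?_
    refine max_le (le_trans (natDegree_mul_le) ?_) (le_trans ih1 (by omega))
    have : ((2 : Polynomial ℝ) * X).natDegree ≤ 1 := by
      refine le_trans natDegree_mul_le ?_; simp
    have h2 : ((n : ℤ) + 1) = ((n + 1 : ℕ) : ℤ) := by push_cast; ring
    rw [h2]
    omega

lemma cheb_eval_half (y : ℝ) (hy : y ≠ 0) :
    ∀ n : ℕ, (T ℝ (n : ℤ)).eval ((y + y⁻¹) / 2) = (y ^ n + y⁻¹ ^ n) / 2 := by
  intro n
  induction n using Nat.twoStepInduction with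
  | zero => rw [Nat.cast_zero, T_zero]; norm_num
  | one => simp [T_one]
  | more n ih1 ih2 =>
    have h : ((n : ℤ) + 2) = ((n + 2 : ℕ) : ℤ) := by push_cast; ring
    rw [← h, T_add_two]
    have h2 : ((n : ℤ) + 1) = ((n + 1 : ℕ) : ℤ) := by push_cast; ring
    simp only [eval_sub, eval_mul, eval_ofNat, eval_X, h2, ih1, ih2]
    have hyy : y * y⁻¹ = 1 := mul_inv_cancel₀ hy
    field_simp
    linear_combination (y⁻¹ ^ n * (y - y⁻¹)) * hyy

lemma cheb_abs_le (n : ℕ) (x : ℝ) (hx : x ∈ Set.Icc (-1 : ℝ) 1) :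
    |(T ℝ (n : ℤ)).eval x| ≤ 1 := by
  obtain ⟨θ, -, rfl⟩ := Real.surjOn_cos hx
  rw [T_real_cos]
  exact Real.abs_cos_le_one _

/-- **Chebyshev min–max estimate.**
For all `0 < a ≤ b` and every `m : ℕ`, there is a real polynomial `p` of degree at most
`m` with `p(0) = 1` such that `|p(t)| ≤ 2 ((√κ − 1)/(√κ + 1))^m` for all `t ∈ [a, b]`,
where `κ = b/a`. -/
theorem chebyshev_minmax_estimate (a b : ℝ) (ha : 0 < a) (hab : a ≤ b) (m : ℕ) :
    ∃ p : Polynomial ℝ, p.natDegree ≤ m ∧ p.eval 0 = 1 ∧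
      ∀ t ∈ Set.Icc a b,
        |p.eval t| ≤ 2 * ((Real.sqrt (b / a) - 1) / (Real.sqrt (b / a) + 1)) ^ m := by
  rcases eq_or_lt_of_le hab with rfl | hlt
  · -- a = b
    have hsq : Real.sqrt (a / a) = 1 := by rw [div_self ha.ne']; exact Real.sqrt_one
    rcases Nat.eq_zero_or_pos m with rfl | hm
    · exact ⟨1, by simp, by simp, fun t ht => by simp [hsq]⟩
    · refine ⟨1 - C a⁻¹ * X, ?_, by simp, ?_⟩
      · refine le_trans (natDegree_sub_le _ _) ?_
        have h1 : (C a⁻¹ * X).natDegree ≤ 1 := le_trans natDegree_mul_le (by simp)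
        exact le_trans (max_le (by simp) h1) hm
      · intro t ht
        have hta : t = a := le_antisymm ht.2 ht.1
        subst hta
        rw [hsq]
        simp [inv_mul_cancel₀ ha.ne', zero_pow hm.ne']
  · -- a < b
    set s := Real.sqrt (b / a) with hs
    have hκ : (1 : ℝ) < b / a := (one_lt_div ha).2 hlt
    have hs1 : 1 < s := by
      rw [hs, show (1:ℝ) = Real.sqrt 1 from Real.sqrt_one.symm]
      exact Real.sqrt_lt_sqrt (by norm_num) hκ
    have hs0 : 0 < s := lt_trans one_pos hs1
    have hssq : s ^ 2 = b / a := Real.sq_sqrt (le_of_lt (lt_trans one_pos hκ))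
    set y : ℝ := (s + 1) / (s - 1) with hy
    have hsm1 : 0 < s - 1 := by linarith
    have hy1 : 1 < y := (one_lt_div hsm1).2 (by linarith)
    have hy0 : 0 < y := lt_trans one_pos hy1
    have hyinv : y⁻¹ = (s - 1) / (s + 1) := by
      rw [hy, inv_div]
    have hba : 0 < b - a := by linarith
    -- the midpoint value
    have hsp : (0:ℝ) < s + 1 := by positivity
    have hs21 : (0:ℝ) < s ^ 2 - 1 := by nlinarith
    have hab' : b = s ^ 2 * a := by
      rw [hssq]; field_simp
    have hx0 : (y + y⁻¹) / 2 = (a + b) / (b - a) := by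
      have h1 : (y + y⁻¹) / 2 = (s ^ 2 + 1) / (s ^ 2 - 1) := by
        rw [hy, inv_div]
        field_simp
        ring
      have h2 : (a + b) / (b - a) = (s ^ 2 + 1) / (s ^ 2 - 1) := by
        rw [hab', show s ^ 2 * a - a = (s ^ 2 - 1) * a by ring,
          show a + s ^ 2 * a = (s ^ 2 + 1) * a by ring,
          mul_div_mul_right _ _ ha.ne']
      rw [h1, h2]
    set q : Polynomial ℝ := C ((a + b) / (b - a)) - C (2 / (b - a)) * X with hq
    have hqdeg : q.natDegree ≤ 1 := by
      refine le_trans (natDegree_sub_le _ _) ?_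
      exact max_le (by simp) (le_trans natDegree_mul_le (by simp))
    have hqeval : ∀ t : ℝ, q.eval t = (a + b - 2 * t) / (b - a) := by
      intro t; simp [hq]; ring
    have hT0 : (T ℝ (m : ℤ)).eval (q.eval 0) = (y ^ m + y⁻¹ ^ m) / 2 := by
      rw [hqeval, ← cheb_eval_half y hy0.ne' m, hx0]
      norm_num
    have hTpos : 0 < (y ^ m + y⁻¹ ^ m) / 2 := by positivity
    refine ⟨C ((y ^ m + y⁻¹ ^ m) / 2)⁻¹ * ((T ℝ (m : ℤ)).comp q), ?_, ?_, ?_⟩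
    · refine le_trans natDegree_mul_le ?_
      simp only [natDegree_C, zero_add]
      refine le_trans natDegree_comp_le ?_
      calc (T ℝ (m : ℤ)).natDegree * q.natDegree ≤ m * 1 :=
            Nat.mul_le_mul (cheb_natDegree_le m) hqdeg
        _ = m := by ring
    · rw [eval_mul, eval_C, eval_comp, hT0]
      exact inv_mul_cancel₀ hTpos.ne'
    · intro t ht
      rw [eval_mul, eval_C, eval_comp, abs_mul, abs_of_pos (inv_pos.2 hTpos)]
      have hqt : q.eval t ∈ Set.Icc (-1 : ℝ) 1 := by
        rw [hqeval]
        constructor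
        · rw [le_div_iff₀ hba]; nlinarith [ht.2]
        · rw [div_le_iff₀ hba]; nlinarith [ht.1]
      have hb1 : |(T ℝ (m : ℤ)).eval (q.eval t)| ≤ 1 := cheb_abs_le m _ hqt
      calc ((y ^ m + y⁻¹ ^ m) / 2)⁻¹ * |(T ℝ (m : ℤ)).eval (q.eval t)|
          ≤ ((y ^ m + y⁻¹ ^ m) / 2)⁻¹ * 1 := by
            exact mul_le_mul_of_nonneg_left hb1 (le_of_lt (inv_pos.2 hTpos))
        _ = 2 / (y ^ m + y⁻¹ ^ m) := by rw [mul_one, inv_div]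
        _ ≤ 2 / y ^ m := by
            apply div_le_div_of_nonneg_left (by norm_num) (by positivity)
            nlinarith [pow_pos (inv_pos.2 hy0) m, pow_pos hy0 m]
        _ = 2 * ((s - 1) / (s + 1)) ^ m := by
            rw [← hyinv, div_eq_mul_inv, ← inv_pow]
end
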